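/- arXiv:1905.05083 — 7 statements merged into one kernel-verified Lean document; each statement's English description precedes it below -/
import Mathlib

section
/- Let D be a strongly connected digraph without loops on at least 3 vertices. Then the line digraph LD of D admits a (1,≤1)-identifying code; that is, for every pair of distinct vertices e and f of LD, the closed in-neighbourhoods N^-[e] and N^-[f] in LD are distinct. -/
/-- The (open) in-neighbourhood of `v` in the digraph with adjacency relation `A`. -/
def Nminus {V : Type*} (A : V → V → Prop) (v : V) : Set V := {u | A u v}

/-- The out-neighbourhood of `v`. -/
def Nplus {V : Type*} (A : V → V → Prop) (v : V) : Set V := {u | A v u}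

/-- The closed in-neighbourhood `N^-[v] = {v} ∪ N^-(v)`. -/
def NminusClosed {V : Type*} (A : V → V → Prop) (v : V) : Set V := insert v (Nminus A v)

/-- `N^-[S] = ⋃_{v ∈ S} N^-[v]`. -/
def NminusSet {V : Type*} (A : V → V → Prop) (S : Set V) : Set V := ⋃ v ∈ S, NminusClosed A v

/-- A digraph is strongly connected if there is a directed path between any ordered
pair of vertices. -/
def StronglyConnected {V : Type*} (A : V → V → Prop) : Prop :=
  ∀ u v : V, Relation.ReflTransGen A u v

/-- The vertices of the line digraph of `A` are the arcs of `A`. -/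
abbrev LineVertex {V : Type*} (A : V → V → Prop) : Type _ := {e : V × V // A e.1 e.2}

/-- Adjacency in the line digraph: there is an arc from `uv` to `wz` iff `v = w`. -/
def LineAdj {V : Type*} (A : V → V → Prop) (e f : LineVertex A) : Prop := e.val.2 = f.val.1

/-- A digraph admits a `(1,≤ℓ)`-identifying code iff all distinct nonempty vertex subsets of
cardinality at most `ℓ` have distinct closed in-neighbourhoods. -/
def AdmitsIdCode {W : Type*} (R : W → W → Prop) (ℓ : ℕ) : Prop :=
  ∀ X Y : Set W, X.Nonempty → Y.Nonempty → X.ncard ≤ ℓ → Y.ncard ≤ ℓ → X ≠ Y →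
    NminusSet R X ≠ NminusSet R Y

/-- `C` is a `(1,≤1)`-identifying code: a dominating set separating closed
in-neighbourhoods of distinct vertices. -/
def IsIdCode {W : Type*} (R : W → W → Prop) (C : Set W) : Prop :=
  (∀ v : W, v ∈ C ∨ ∃ u ∈ C, R u v) ∧
  ∀ x y : W, x ≠ y → NminusClosed R x ∩ C ≠ NminusClosed R y ∩ C

/-- The identifying number: minimum size of a `(1,≤1)`-identifying code. -/
noncomputable def idNumber {W : Type*} (R : W → W → Prop) : ℕ :=
  sInf {n | ∃ C : Set W, IsIdCode R C ∧ C.ncard = n}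

/-- The set of arcs of `A` with head `v`. -/
def omegaMinus {V : Type*} (A : V → V → Prop) (v : V) : Set (V × V) :=
  {p | A p.1 p.2 ∧ p.2 = v}

/-- The set of arcs of `A` with tail `v`. -/
def omegaPlus {V : Type*} (A : V → V → Prop) (v : V) : Set (V × V) :=
  {p | A p.1 p.2 ∧ p.1 = v}

/-- `C` is an arc-identifying code of the digraph `A`: an arc-dominating and
arc-separating set of arcs. -/
def IsArcIdCode {V : Type*} (A : V → V → Prop) (C : Set (V × V)) : Prop :=
  (∀ p : V × V, A p.1 p.2 → ((insert p (omegaMinus A p.1)) ∩ C).Nonempty) ∧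
  ∀ p q : V × V, A p.1 p.2 → A q.1 q.2 → p ≠ q →
    (insert p (omegaMinus A p.1)) ∩ C ≠ (insert q (omegaMinus A q.1)) ∩ C

/-- Vertices of the Kautz digraph `K(d,k)`: words of length `k` over an alphabet of
`d+1` symbols with no two consecutive symbols equal. -/
def KautzVertex (d k : ℕ) : Type :=
  {x : Fin k → Fin (d + 1) // ∀ i j : Fin k, (j : ℕ) = (i : ℕ) + 1 → x i ≠ x j}

/-- Adjacency in the Kautz digraph: there is an arc from `x₁x₂…x_k` to `x₂…x_k y`. -/
def KautzAdj (d k : ℕ) (x y : KautzVertex d k) : Prop :=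
  ∀ i j : Fin k, (j : ℕ) = (i : ℕ) + 1 → y.val i = x.val j

/-!
If two distinct arcs `e ≠ f` had the same closed in-neighbourhood in the line digraph, each
would be an in-neighbour of the other, so `e = ab` and `f = ba`. Every other arc into `a` is an
in-neighbour of `e`, hence of `f`, so it must be `ba` itself (the arcs into `f` end in `b ≠ a`,
as `e ≠ f`), i.e. it comes from `b`; symmetrically every arc into `b`
comes from `a`. Then no vertex outside `{a, b}` can reach `a`, contradicting strong
connectivity as soon as there is a third vertex.
-/

theorem adj_and_adj_of_nminusClosed_eq {W : Type*} {R : W → W → Prop} {x y : W} (hxy : x ≠ y)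
    (h : NminusClosed R x = NminusClosed R y) : R x y ∧ R y x := by
  have hx : x ∈ NminusClosed R y := h ▸ Set.mem_insert x _
  have hy : y ∈ NminusClosed R x := h ▸ Set.mem_insert y _
  exact ⟨hx.resolve_left hxy, hy.resolve_left hxy.symm⟩

theorem StronglyConnected.eq_univ_of_inClosed {V : Type*} {A : V → V → Prop}
    (hsc : StronglyConnected A) {S : Set V} (hS : ∀ u v, A u v → v ∈ S → u ∈ S)
    {v : V} (hv : v ∈ S) : S = Set.univ := by
  refine Set.eq_univ_of_forall fun u => ?_
  induction hsc u v using Relation.ReflTransGen.head_induction_on with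
  | refl => exact hv
  | head huw _ ih => exact hS _ _ huw ih

theorem exists_ne_ne_of_three {V : Type*} (h : ∃ x y z : V, x ≠ y ∧ x ≠ z ∧ y ≠ z) (a b : V) :
    ∃ w, w ≠ a ∧ w ≠ b := by
  obtain ⟨x, y, z, hxy, hxz, hyz⟩ := h
  by_contra! hab
  have hmem (w : V) : w = a ∨ w = b := or_iff_not_imp_left.2 (hab w)
  have := hmem x; have := hmem y; have := hmem z
  grind

namespace LineVertex

variable {V : Type*} {A : V → V → Prop}

theorem lineAdj_of_nminusClosed_eq {e f : LineVertex A} (hef : e ≠ f)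
    (h : NminusClosed (LineAdj A) e = NminusClosed (LineAdj A) f) :
    e.val.2 = f.val.1 ∧ f.val.2 = e.val.1 :=
  adj_and_adj_of_nminusClosed_eq hef h

theorem fst_ne_snd_of_nminusClosed_eq {e f : LineVertex A} (hef : e ≠ f)
    (h : NminusClosed (LineAdj A) e = NminusClosed (LineAdj A) f) : e.val.1 ≠ e.val.2 := by
  obtain ⟨hef₁, hfe₁⟩ := lineAdj_of_nminusClosed_eq hef h
  intro heq
  exact hef (Subtype.ext (Prod.ext (heq.trans hef₁) (heq.symm.trans hfe₁.symm)))

theorem eq_fst_of_adj_of_nminusClosed_eq {e f : LineVertex A} (hef : e ≠ f)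
    (h : NminusClosed (LineAdj A) e = NminusClosed (LineAdj A) f) {u : V}
    (hu : A u e.val.1) : u = f.val.1 := by
  have hmem : (⟨(u, e.val.1), hu⟩ : LineVertex A) ∈ NminusClosed (LineAdj A) f :=
    h ▸ Set.mem_insert_of_mem _ rfl
  rcases hmem with hg | hg
  · exact congrArg (fun g : LineVertex A => g.val.1) hg
  · obtain ⟨hef₁, -⟩ := lineAdj_of_nminusClosed_eq hef h
    exact absurd (hg.trans hef₁.symm) (fst_ne_snd_of_nminusClosed_eq hef h)

end LineVertex

theorem line_digraph_admits_id_code_general {V : Type*} (A : V → V → Prop)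
    (hsc : StronglyConnected A)
    (hcard : ∃ x y z : V, x ≠ y ∧ x ≠ z ∧ y ≠ z) :
    ∀ e f : LineVertex A, e ≠ f →
      NminusClosed (LineAdj A) e ≠ NminusClosed (LineAdj A) f := by
  intro e f hef h
  have hclosed : ∀ u v, A u v → v ∈ ({e.val.1, f.val.1} : Set V) →
      u ∈ ({e.val.1, f.val.1} : Set V) := by
    rintro u v huv (rfl | rfl)
    · exact Or.inr (LineVertex.eq_fst_of_adj_of_nminusClosed_eq hef h huv)
    · exact Or.inl (LineVertex.eq_fst_of_adj_of_nminusClosed_eq hef.symm h.symm huv)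
  have huniv := hsc.eq_univ_of_inClosed hclosed (Set.mem_insert _ _)
  obtain ⟨w, hwe, hwf⟩ := exists_ne_ne_of_three hcard e.val.1 f.val.1
  have hw : w ∈ ({e.val.1, f.val.1} : Set V) := huniv ▸ Set.mem_univ w
  rcases hw with hw | hw
  exacts [hwe hw, hwf hw]

/-- The line digraph of a strongly connected loopless digraph on at least 3 vertices
admits a `(1,≤1)`-identifying code: distinct vertices have distinct closed
in-neighbourhoods. -/
theorem line_digraph_admits_id_code {V : Type*} (A : V → V → Prop)
    (hloop : ∀ v : V, ¬ A v v) (hsc : StronglyConnected A)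
    (hcard : ∃ x y z : V, x ≠ y ∧ x ≠ z ∧ y ≠ z) :
    ∀ e f : LineVertex A, e ≠ f →
      NminusClosed (LineAdj A) e ≠ NminusClosed (LineAdj A) f :=
  line_digraph_admits_id_code_general A hsc hcard
end

section
/- Let LD be the line digraph of a strongly connected digraph D without loops, with V(D) finite. Suppose LD is not isomorphic to a directed 4-cycle and that no vertex of LD of in-degree 1 lies on a digon. Then LD admits a (1,≤2)-identifying code if and only if all three of the following hold: (i) LD contains no directed 3-cycle having at least two vertices of in-degree 1; (ii) there do not exist four distinct vertices x, x', y, y' of LD such that N^-(x) = {y, y'}, N^-(y') = {x'}, and x ∈ N^-(x') ∩ N^-(y); (iii) there do not exist four distinct vertices x, x', y, y' of LD such that N^-(x) = {y, y'}, N^-(y) = {x, x'}, and N^-(x') ∩ N^-(y') ≠ ∅. -/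
/-!
A vertex of the line digraph is an arc `uv` of `D`, and its in-neighbours are the arcs with
head `u`: two vertices with a common in-neighbour have the same in-neighbourhood. With this,
each of (i), (ii), (iii) exhibits two distinct pairs with equal closed in-neighbourhoods.

Conversely, let `N⁻[{a, b}] = N⁻[{c, d}]`. An element of one pair that is not in the other has
its head at the tail of an element of the other pair, and an arc entering a tail that the other
pair does not share lies in the other pair. Since every vertex of `D` is entered by an arc, a
case analysis on which of the four tails coincide determines the heads of `a, b, c, d` and
produces a vertex of in-degree one on a digon, one of (i), (ii), (iii), or the directed
4-cycle `a → c → b → d → a` with all in-degrees one, which by strong connectivity is the whole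
digraph.
-/

section Digraph

variable {W : Type*} {R : W → W → Prop}

def HasConfigI (R : W → W → Prop) : Prop :=
  ∃ x y z : W, R x y ∧ R y z ∧ R z x ∧
    (((Nminus R x).ncard = 1 ∧ (Nminus R y).ncard = 1) ∨
     ((Nminus R y).ncard = 1 ∧ (Nminus R z).ncard = 1) ∨
     ((Nminus R x).ncard = 1 ∧ (Nminus R z).ncard = 1))

def HasConfigII (R : W → W → Prop) : Prop :=
  ∃ x x' y y' : W, x ≠ x' ∧ x ≠ y ∧ x ≠ y' ∧ x' ≠ y ∧ x' ≠ y' ∧ y ≠ y' ∧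
    Nminus R x = {y, y'} ∧ Nminus R y' = {x'} ∧ x ∈ Nminus R x' ∩ Nminus R y

def HasConfigIII (R : W → W → Prop) : Prop :=
  ∃ x x' y y' : W, x ≠ x' ∧ x ≠ y ∧ x ≠ y' ∧ x' ≠ y ∧ x' ≠ y' ∧ y ≠ y' ∧
    Nminus R x = {y, y'} ∧ Nminus R y = {x, x'} ∧ (Nminus R x' ∩ Nminus R y').Nonempty

def NoDigonAtInDegreeOne (R : W → W → Prop) : Prop :=
  ∀ e : W, (Nminus R e).ncard = 1 → ¬ ∃ f : W, R e f ∧ R f e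

def IsDirectedCycle (R : W → W → Prop) (n : ℕ) : Prop :=
  ∃ φ : W ≃ ZMod n, ∀ e f : W, R e f ↔ φ f = φ e + 1

theorem mem_NminusSet_pair {a b f : W} :
    f ∈ NminusSet R {a, b} ↔ f = a ∨ R f a ∨ f = b ∨ R f b := by
  simp only [NminusSet, NminusClosed, Nminus, Set.mem_iUnion, Set.mem_insert_iff,
    Set.mem_singleton_iff, exists_prop, exists_eq_or_imp, exists_eq_left, Set.mem_ofPred_eq,
    or_assoc]

theorem NminusSet_pair (a b : W) :
    NminusSet R {a, b} = {a, b} ∪ Nminus R a ∪ Nminus R b := by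
  ext f
  simp only [mem_NminusSet_pair, Set.mem_union, Set.mem_insert_iff, Set.mem_singleton_iff]
  exact ⟨by tauto, by tauto⟩

theorem AdmitsIdCode.pair_eq (h : AdmitsIdCode R 2) {a b c d : W}
    (heq : NminusSet R {a, b} = NminusSet R {c, d}) : ({a, b} : Set W) = {c, d} := by
  by_contra hne
  have hcard (x y : W) : ({x, y} : Set W).ncard ≤ 2 :=
    (Set.ncard_insert_le _ _).trans (by rw [Set.ncard_singleton])
  exact h _ _ (Set.insert_nonempty _ _) (Set.insert_nonempty _ _) (hcard a b) (hcard c d) hne heq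

theorem admitsIdCode_two_of_pair_eq [Finite W]
    (h : ∀ a b c d : W, NminusSet R {a, b} = NminusSet R {c, d} → ({a, b} : Set W) = {c, d}) :
    AdmitsIdCode R 2 := by
  have eq_pair (X : Set W) (hX : X.Nonempty) (hX2 : X.ncard ≤ 2) : ∃ a b, X = {a, b} := by
    obtain h1 | h2 : X.ncard = 1 ∨ X.ncard = 2 := by
      have := (Set.ncard_pos X.toFinite).2 hX
      omega
    · obtain ⟨a, rfl⟩ := Set.ncard_eq_one.mp h1
      exact ⟨a, a, (Set.pair_eq_singleton a).symm⟩
    · obtain ⟨a, b, -, rfl⟩ := Set.ncard_eq_two.mp h2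
      exact ⟨a, b, rfl⟩
  intro X Y hX hY hX2 hY2 hXY heq
  obtain ⟨a, b, rfl⟩ := eq_pair X hX hX2
  obtain ⟨c, d, rfl⟩ := eq_pair Y hY hY2
  exact hXY (h a b c d heq)

theorem Set.eq_singleton_of_ncard_eq_one {s : Set W} {a : W} (h : s.ncard = 1) (ha : a ∈ s) :
    s = {a} := by
  obtain ⟨b, rfl⟩ := Set.ncard_eq_one.mp h
  rw [Set.mem_singleton_iff.mp ha]

theorem NminusSet_pair_eq_of_threeCycle {x y z : W} (hyz : R y z)
    (hx : Nminus R x = {z}) (hy : Nminus R y = {x}) :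
    NminusSet R {z, x} = NminusSet R {z, y} := by
  rw [NminusSet_pair, NminusSet_pair, hx, hy]
  have : y ∈ Nminus R z := hyz
  ext f
  aesop

theorem NminusSet_pair_eq_of_configII {x x' y y' : W} (hxy : R x y)
    (hx : Nminus R x = {y, y'}) (hy' : Nminus R y' = {x'}) (hx'y : Nminus R x' = Nminus R y) :
    NminusSet R {x, x'} = NminusSet R {y, y'} := by
  rw [NminusSet_pair, NminusSet_pair, hx, hy', hx'y]
  have : x ∈ Nminus R y := hxy
  ext f
  aesop

theorem NminusSet_pair_eq_of_configIII {x x' y y' : W}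
    (hx : Nminus R x = {y, y'}) (hy : Nminus R y = {x, x'}) (hx'y' : Nminus R x' = Nminus R y') :
    NminusSet R {x, x'} = NminusSet R {y, y'} := by
  rw [NminusSet_pair, NminusSet_pair, hx, hy, hx'y']
  ext f
  simp only [Set.mem_union, Set.mem_insert_iff, Set.mem_singleton_iff]
  tauto

theorem AdmitsIdCode.not_hasConfigI (hirr : ∀ v, ¬ R v v) (h : AdmitsIdCode R 2) :
    ¬ HasConfigI R := by
  have key {x y z : W} (hxy : R x y) (hyz : R y z) (hzx : R z x)
      (hx : (Nminus R x).ncard = 1) (hy : (Nminus R y).ncard = 1) : False := by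
    have hpair := h.pair_eq (NminusSet_pair_eq_of_threeCycle hyz
      (Set.eq_singleton_of_ncard_eq_one hx hzx) (Set.eq_singleton_of_ncard_eq_one hy hxy))
    rcases Set.pair_eq_pair_iff.mp hpair with ⟨-, rfl⟩ | ⟨-, rfl⟩
    exacts [hirr _ hxy, hirr _ hzx]
  rintro ⟨x, y, z, hxy, hyz, hzx, ⟨hx, hy⟩ | ⟨hy, hz⟩ | ⟨hx, hz⟩⟩
  exacts [key hxy hyz hzx hx hy, key hyz hzx hxy hy hz, key hzx hxy hyz hz hx]

theorem AdmitsIdCode.not_hasConfigII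
    (hline : ∀ {f u v : W}, R f u → R f v → Nminus R u = Nminus R v) (h : AdmitsIdCode R 2) :
    ¬ HasConfigII R := by
  rintro ⟨x, x', y, y', -, hxy, hxy', -, -, -, hx, hy', hxx', hxy₁⟩
  rcases Set.pair_eq_pair_iff.mp
      (h.pair_eq (NminusSet_pair_eq_of_configII hxy₁ hx hy' (hline hxx' hxy₁))) with
    ⟨h', -⟩ | ⟨h', -⟩
  exacts [hxy h', hxy' h']

theorem AdmitsIdCode.not_hasConfigIII
    (hline : ∀ {f u v : W}, R f u → R f v → Nminus R u = Nminus R v) (h : AdmitsIdCode R 2) :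
    ¬ HasConfigIII R := by
  rintro ⟨x, x', y, y', -, hxy, hxy', -, -, -, hx, hy, w, hwx', hwy'⟩
  rcases Set.pair_eq_pair_iff.mp
      (h.pair_eq (NminusSet_pair_eq_of_configIII hx hy (hline hwx' hwy'))) with
    ⟨h', -⟩ | ⟨h', -⟩
  exacts [hxy h', hxy' h']

theorem mem_of_reflTransGen_of_Nminus_subset {S : Set W} (hS : ∀ s ∈ S, Nminus R s ⊆ S)
    {e s : W} (hes : Relation.ReflTransGen R e s) (hs : s ∈ S) : e ∈ S := by
  induction hes using Relation.ReflTransGen.head_induction_on with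
  | refl => exact hs
  | head hef _ ih => exact hS _ ih hef

theorem isDirectedCycle_of_equiv {n : ℕ} (ψ : ZMod n ≃ W)
    (hψ : ∀ i, Nminus R (ψ (i + 1)) = {ψ i}) : IsDirectedCycle R n := by
  refine ⟨ψ.symm, fun e f => ?_⟩
  obtain ⟨j, rfl⟩ := ψ.surjective f
  have hN := hψ (j - 1)
  rw [sub_add_cancel] at hN
  change e ∈ Nminus R (ψ j) ↔ _
  rw [hN, Set.mem_singleton_iff, ← ψ.symm_apply_eq, eq_sub_iff_add_eq, eq_comm,
    ψ.symm_apply_apply]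

theorem isDirectedCycle_four (hsc : StronglyConnected R) {a b c d : W}
    (hab : a ≠ b) (hac : a ≠ c) (had : a ≠ d) (hbc : b ≠ c) (hbd : b ≠ d) (hcd : c ≠ d)
    (ha : Nminus R a = {d}) (hc : Nminus R c = {a}) (hb : Nminus R b = {c})
    (hd : Nminus R d = {b}) : IsDirectedCycle R 4 := by
  let ψ : ZMod 4 → W := ![a, c, b, d]
  have hψ : ∀ i, Nminus R (ψ (i + 1)) = {ψ i} := by
    intro i
    fin_cases i <;> simpa [ψ]
  have hsurj : ψ.Surjective := by
    have hS : ∀ s ∈ Set.range ψ, Nminus R s ⊆ Set.range ψ := by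
      rintro _ ⟨i, rfl⟩
      rw [← sub_add_cancel i 1, hψ]
      exact Set.singleton_subset_iff.mpr ⟨_, rfl⟩
    exact fun f => mem_of_reflTransGen_of_Nminus_subset hS (hsc f a) ⟨0, rfl⟩
  have hinj : ψ.Injective := by
    intro i j hij
    fin_cases i <;> fin_cases j <;> first | rfl | simp_all [ψ, eq_comm]
  exact isDirectedCycle_of_equiv (Equiv.ofBijective ψ ⟨hinj, hsurj⟩) hψ

end Digraph

namespace LineDigraph

variable {V : Type*} {A : V → V → Prop} {a b c d : LineVertex A}

-- An arc `e` of `D` has tail `e.val.1` and head `e.val.2`.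

theorem head_ne_tail (hloop : ∀ v : V, ¬ A v v) (e : LineVertex A) : e.val.2 ≠ e.val.1 :=
  fun h => hloop _ (h ▸ e.prop)

theorem exists_lineAdj (hloop : ∀ v : V, ¬ A v v) (hsc : StronglyConnected A)
    (e : LineVertex A) : ∃ f : LineVertex A, LineAdj A f e := by
  rcases (hsc e.val.2 e.val.1).cases_tail with h | ⟨u, -, hu⟩
  · exact absurd h.symm (head_ne_tail hloop e)
  · exact ⟨⟨(u, e.val.1), hu⟩, rfl⟩

theorem Nminus_lineAdj_eq {f u v : LineVertex A} (hu : LineAdj A f u) (hv : LineAdj A f v) :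
    Nminus (LineAdj A) u = Nminus (LineAdj A) v := by
  ext e
  exact ⟨fun he => he.trans (hu.symm.trans hv), fun he => he.trans (hv.symm.trans hu)⟩

theorem _root_.StronglyConnected.lineAdj (hsc : StronglyConnected A) :
    StronglyConnected (LineAdj A) := by
  intro e f
  suffices ∀ v, Relation.ReflTransGen A v f.val.1 →
      ∀ e : LineVertex A, e.val.2 = v → Relation.ReflTransGen (LineAdj A) e f from
    this _ (hsc _ _) e rfl
  intro v hv
  induction hv using Relation.ReflTransGen.head_induction_on with
  | refl => exact fun e he => .single he
  | @head v w hvw _ ih =>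
    exact fun e he => .head (show LineAdj A e ⟨(v, w), hvw⟩ from he) (ih _ rfl)

theorem Nminus_lineAdj_eq_singleton {f g : LineVertex A} (hfg : f.val.2 = g.val.1)
    (h : ∀ e : LineVertex A, e.val.2 = g.val.1 → e = f) : Nminus (LineAdj A) g = {f} :=
  Set.eq_singleton_iff_unique_mem.mpr ⟨hfg, h⟩

theorem Nminus_lineAdj_eq_pair {f f' g : LineVertex A} (hfg : f.val.2 = g.val.1)
    (hf'g : f'.val.2 = g.val.1) (h : ∀ e : LineVertex A, e.val.2 = g.val.1 → e = f ∨ e = f') :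
    Nminus (LineAdj A) g = {f, f'} := by
  ext e
  exact ⟨h e, by rintro (rfl | rfl) <;> assumption⟩

theorem false_of_digon (hdigon : NoDigonAtInDegreeOne (LineAdj A)) {f g : LineVertex A}
    (hfg : f.val.2 = g.val.1) (hgf : g.val.2 = f.val.1)
    (hg : ∀ e : LineVertex A, e.val.2 = g.val.1 → e = f) : False := by
  refine hdigon g ?_ ⟨f, hgf, hfg⟩
  rw [Nminus_lineAdj_eq_singleton hfg hg, Set.ncard_singleton]

theorem head_eq_tail_of_NminusSet_pair_eq
    (heq : NminusSet (LineAdj A) {a, b} = NminusSet (LineAdj A) {c, d}) {x : LineVertex A}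
    (hx : x = a ∨ x = b) (hxc : x ≠ c) (hxd : x ≠ d) :
    x.val.2 = c.val.1 ∨ x.val.2 = d.val.1 := by
  have hmem : x ∈ NminusSet (LineAdj A) {c, d} := by
    rw [← heq, mem_NminusSet_pair]
    tauto
  rw [mem_NminusSet_pair] at hmem
  rcases hmem with h | h | h | h
  exacts [(hxc h).elim, .inl h, (hxd h).elim, .inr h]

theorem eq_or_eq_of_head_eq_tail_of_NminusSet_pair_eq
    (heq : NminusSet (LineAdj A) {a, b} = NminusSet (LineAdj A) {c, d}) {x f : LineVertex A}
    (hx : x = a ∨ x = b) (hxc : x.val.1 ≠ c.val.1) (hxd : x.val.1 ≠ d.val.1)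
    (hf : f.val.2 = x.val.1) : f = c ∨ f = d := by
  have hmem : f ∈ NminusSet (LineAdj A) {c, d} := by
    rw [← heq, mem_NminusSet_pair]
    rcases hx with rfl | rfl
    exacts [.inr (.inl hf), .inr (.inr (.inr hf))]
  rw [mem_NminusSet_pair] at hmem
  rcases hmem with h | h | h | h
  exacts [.inl h, (hxc (hf.symm.trans h)).elim, .inr h, (hxd (hf.symm.trans h)).elim]

theorem tail_eq_head_of_NminusSet_pair_eq (hloop : ∀ v : V, ¬ A v v)
    (hsc : StronglyConnected A)
    (heq : NminusSet (LineAdj A) {a, b} = NminusSet (LineAdj A) {c, d}) {x : LineVertex A}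
    (hx : x = a ∨ x = b) (hxc : x.val.1 ≠ c.val.1) (hxd : x.val.1 ≠ d.val.1) :
    c.val.2 = x.val.1 ∨ d.val.2 = x.val.1 := by
  obtain ⟨f, hf⟩ := exists_lineAdj hloop hsc x
  rcases eq_or_eq_of_head_eq_tail_of_NminusSet_pair_eq heq hx hxc hxd hf with rfl | rfl
  exacts [.inl hf, .inr hf]

theorem eq_of_NminusSet_pair_self_eq (hloop : ∀ v : V, ¬ A v v) (hsc : StronglyConnected A)
    (hdigon : NoDigonAtInDegreeOne (LineAdj A))
    (heq : NminusSet (LineAdj A) {a, a} = NminusSet (LineAdj A) {c, d}) : c = a := by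
  by_contra hca
  have hc : c.val.2 = a.val.1 :=
    (head_eq_tail_of_NminusSet_pair_eq heq.symm (.inl rfl) hca hca).elim id id
  have htail : c.val.1 ≠ a.val.1 := fun h => head_ne_tail hloop c (hc.trans h.symm)
  have hin (f : LineVertex A) (hf : f.val.2 = c.val.1) : f = a :=
    (eq_or_eq_of_head_eq_tail_of_NminusSet_pair_eq heq.symm (.inl rfl) htail htail hf).elim id id
  obtain ⟨g, hg⟩ := exists_lineAdj hloop hsc c
  exact false_of_digon hdigon (hin g hg ▸ hg) hc hin

theorem NminusSet_pair_ne_of_shared_of_tail_eq (hloop : ∀ v : V, ¬ A v v)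
    (hdigon : NoDigonAtInDegreeOne (LineAdj A)) (hba : b ≠ a) (hbd : b ≠ d)
    (htab : b.val.1 = a.val.1) (htad : d.val.1 ≠ a.val.1) :
    NminusSet (LineAdj A) {a, b} ≠ NminusSet (LineAdj A) {a, d} := by
  intro heq
  have := head_ne_tail hloop b
  have hb : b.val.2 = d.val.1 := by
    have := head_eq_tail_of_NminusSet_pair_eq heq (.inr rfl) hba hbd
    grind
  have hd : d.val.2 = b.val.1 := by
    have := head_eq_tail_of_NminusSet_pair_eq heq.symm (.inr rfl) (by grind) (by grind)
    grind
  have hin (f : LineVertex A) (hf : f.val.2 = d.val.1) : f = b := by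
    have := eq_or_eq_of_head_eq_tail_of_NminusSet_pair_eq heq.symm (.inr rfl) htad (by grind) hf
    grind
  exact false_of_digon hdigon hb hd hin

theorem NminusSet_pair_ne_of_shared_of_head_eq_tail (hloop : ∀ v : V, ¬ A v v)
    (hsc : StronglyConnected A) (hI : ¬ HasConfigI (LineAdj A))
    (htab : a.val.1 ≠ b.val.1) (htad : a.val.1 ≠ d.val.1) (htbd : b.val.1 ≠ d.val.1)
    (hb : b.val.2 = a.val.1) :
    NminusSet (LineAdj A) {a, b} ≠ NminusSet (LineAdj A) {a, d} := by
  intro heq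
  have hinb (f : LineVertex A) (hf : f.val.2 = b.val.1) : f = a ∨ f = d :=
    eq_or_eq_of_head_eq_tail_of_NminusSet_pair_eq heq (.inr rfl) htab.symm htbd hf
  have hind (f : LineVertex A) (hf : f.val.2 = d.val.1) : f = a ∨ f = b :=
    eq_or_eq_of_head_eq_tail_of_NminusSet_pair_eq heq.symm (.inr rfl) htad.symm htbd.symm hf
  have ha : a.val.2 = d.val.1 := by
    have := tail_eq_head_of_NminusSet_pair_eq hloop hsc heq.symm (.inr rfl) htad.symm htbd.symm
    grind
  have hd : d.val.2 = b.val.1 := by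
    have := tail_eq_head_of_NminusSet_pair_eq hloop hsc heq (.inr rfl) htab.symm htbd
    grind
  have hNd : Nminus (LineAdj A) d = {a} :=
    Nminus_lineAdj_eq_singleton ha fun f hf => by have := hind f hf; grind
  have hNb : Nminus (LineAdj A) b = {d} :=
    Nminus_lineAdj_eq_singleton hd fun f hf => by have := hinb f hf; grind
  exact hI ⟨a, d, b, ha, hd, hb, .inr (.inl ⟨Set.ncard_eq_one.mpr ⟨a, hNd⟩,
    Set.ncard_eq_one.mpr ⟨d, hNb⟩⟩)⟩

theorem eq_of_NminusSet_pair_eq_of_shared (hloop : ∀ v : V, ¬ A v v)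
    (hsc : StronglyConnected A) (hdigon : NoDigonAtInDegreeOne (LineAdj A))
    (hI : ¬ HasConfigI (LineAdj A)) (hba : b ≠ a) (hda : d ≠ a)
    (heq : NminusSet (LineAdj A) {a, b} = NminusSet (LineAdj A) {a, d}) : b = d := by
  by_contra hbd
  have hb := head_eq_tail_of_NminusSet_pair_eq heq (.inr rfl) hba hbd
  have hd := head_eq_tail_of_NminusSet_pair_eq heq.symm (.inr rfl) hda (Ne.symm hbd)
  by_cases htbd : b.val.1 = d.val.1
  · have := head_ne_tail hloop b
    have := head_ne_tail hloop d
    grind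
  by_cases htab : b.val.1 = a.val.1
  · exact NminusSet_pair_ne_of_shared_of_tail_eq hloop hdigon hba hbd htab (by grind) heq
  by_cases htad : d.val.1 = a.val.1
  · exact NminusSet_pair_ne_of_shared_of_tail_eq hloop hdigon hda (Ne.symm hbd) htad
      (by grind) heq.symm
  rcases hb with hb | hb
  · exact NminusSet_pair_ne_of_shared_of_head_eq_tail hloop hsc hI (Ne.symm htab)
      (Ne.symm htad) htbd hb heq
  rcases hd with hd | hd
  · exact NminusSet_pair_ne_of_shared_of_head_eq_tail hloop hsc hI (Ne.symm htad)
      (Ne.symm htab) (Ne.symm htbd) hd heq.symm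
  -- `b ⇄ d` is a digon, and `a` enters at most one of `b`, `d`: the other has in-degree one.
  by_cases had : a.val.2 = d.val.1
  · refine false_of_digon hdigon hd hb fun f hf => ?_
    have := eq_or_eq_of_head_eq_tail_of_NminusSet_pair_eq heq (.inr rfl) htab htbd hf
    grind
  · refine false_of_digon hdigon hb hd fun f hf => ?_
    have := eq_or_eq_of_head_eq_tail_of_NminusSet_pair_eq heq.symm (.inr rfl) htad
      (Ne.symm htbd) hf
    grind

theorem NminusSet_pair_ne_of_disjoint_of_tail_eq (hloop : ∀ v : V, ¬ A v v)
    (hdigon : NoDigonAtInDegreeOne (LineAdj A)) (hab : a ≠ b) (hac : a ≠ c) (had : a ≠ d)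
    (hbc : b ≠ c) (hbd : b ≠ d) (htab : a.val.1 = b.val.1) :
    NminusSet (LineAdj A) {a, b} ≠ NminusSet (LineAdj A) {c, d} := by
  intro heq
  wlog ha : a.val.2 = c.val.1 generalizing c d
  · exact this had hac hbd hbc (Set.pair_comm c d ▸ heq)
      ((head_eq_tail_of_NminusSet_pair_eq heq (.inl rfl) hac had).resolve_left ha)
  have hb : b.val.2 = d.val.1 := by
    have := head_eq_tail_of_NminusSet_pair_eq heq (.inr rfl) hbc hbd
    grind
  have := head_ne_tail hloop c
  have hc : c.val.2 = a.val.1 := by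
    have := head_eq_tail_of_NminusSet_pair_eq heq.symm (.inl rfl) (Ne.symm hac) (Ne.symm hbc)
    grind
  refine false_of_digon hdigon ha hc fun f hf => ?_
  have := eq_or_eq_of_head_eq_tail_of_NminusSet_pair_eq heq.symm (.inl rfl) (by grind)
    (by grind) hf
  grind

theorem NminusSet_pair_ne_of_disjoint_of_one_tail_eq (hloop : ∀ v : V, ¬ A v v)
    (hsc : StronglyConnected A) (hdigon : NoDigonAtInDegreeOne (LineAdj A))
    (hII : ¬ HasConfigII (LineAdj A)) (hIII : ¬ HasConfigIII (LineAdj A))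
    (hab : a ≠ b) (hac : a ≠ c) (had : a ≠ d) (hbc : b ≠ c) (hbd : b ≠ d) (hcd : c ≠ d)
    (htac : a.val.1 = c.val.1) (htbc : b.val.1 ≠ c.val.1) (htbd : b.val.1 ≠ d.val.1)
    (htda : d.val.1 ≠ a.val.1) :
    NminusSet (LineAdj A) {a, b} ≠ NminusSet (LineAdj A) {c, d} := by
  intro heq
  have := head_ne_tail hloop a
  have := head_ne_tail hloop c
  have ha : a.val.2 = d.val.1 := by
    have := head_eq_tail_of_NminusSet_pair_eq heq (.inl rfl) hac had
    grind
  have hc : c.val.2 = b.val.1 := by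
    have := head_eq_tail_of_NminusSet_pair_eq heq.symm (.inl rfl) (Ne.symm hac) (Ne.symm hbc)
    grind
  have hinb (f : LineVertex A) (hf : f.val.2 = b.val.1) : f = c ∨ f = d :=
    eq_or_eq_of_head_eq_tail_of_NminusSet_pair_eq heq (.inr rfl) htbc htbd hf
  have hind (f : LineVertex A) (hf : f.val.2 = d.val.1) : f = a ∨ f = b :=
    eq_or_eq_of_head_eq_tail_of_NminusSet_pair_eq heq.symm (.inr rfl) htda (Ne.symm htbd) hf
  have hb := head_eq_tail_of_NminusSet_pair_eq heq (.inr rfl) hbc hbd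
  have hd := head_eq_tail_of_NminusSet_pair_eq heq.symm (.inr rfl) (Ne.symm had) (Ne.symm hbd)
  rcases hb with hb | hb <;> rcases hd with hd | hd
  · exact false_of_digon hdigon hc hb fun f hf => by have := hinb f hf; grind
  · refine hII ⟨b, a, c, d, Ne.symm hab, hbc, hbd, hac, had, hcd,
      Nminus_lineAdj_eq_pair hc hd hinb, Nminus_lineAdj_eq_singleton ha ?_,
      show b.val.2 = a.val.1 by grind, hb⟩
    intro f hf
    have := hind f hf
    grind
  · refine hII ⟨d, c, a, b, Ne.symm hcd, Ne.symm had, Ne.symm hbd, Ne.symm hac,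
      Ne.symm hbc, hab, Nminus_lineAdj_eq_pair ha hb hind, Nminus_lineAdj_eq_singleton hc ?_,
      show d.val.2 = c.val.1 by grind, hd⟩
    intro f hf
    have := hinb f hf
    grind
  · obtain ⟨w, hw⟩ := exists_lineAdj hloop hsc a
    exact hIII ⟨b, a, d, c, Ne.symm hab, hbd, hbc, had, hac, Ne.symm hcd,
      Nminus_lineAdj_eq_pair hd hc fun f hf => (hinb f hf).symm,
      Nminus_lineAdj_eq_pair hb ha fun f hf => (hind f hf).symm,
      ⟨w, hw, show w.val.2 = c.val.1 from hw.trans htac⟩⟩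

theorem NminusSet_pair_ne_of_disjoint_of_cross_tail_eq (hloop : ∀ v : V, ¬ A v v)
    (hsc : StronglyConnected A) (hdigon : NoDigonAtInDegreeOne (LineAdj A))
    (hII : ¬ HasConfigII (LineAdj A)) (hIII : ¬ HasConfigIII (LineAdj A))
    (hab : a ≠ b) (hac : a ≠ c) (had : a ≠ d) (hbc : b ≠ c) (hbd : b ≠ d) (hcd : c ≠ d)
    (htab : a.val.1 ≠ b.val.1) (htcd : c.val.1 ≠ d.val.1) (htac : a.val.1 = c.val.1) :
    NminusSet (LineAdj A) {a, b} ≠ NminusSet (LineAdj A) {c, d} := by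
  by_cases htbd : b.val.1 = d.val.1
  · intro heq
    have := head_ne_tail hloop a
    have := head_ne_tail hloop c
    have := head_eq_tail_of_NminusSet_pair_eq heq (.inl rfl) hac had
    have := head_eq_tail_of_NminusSet_pair_eq heq.symm (.inl rfl) (Ne.symm hac) (Ne.symm hbc)
    grind
  · exact NminusSet_pair_ne_of_disjoint_of_one_tail_eq hloop hsc hdigon hII hIII hab hac had hbc
      hbd hcd htac (by grind) htbd (by grind)

theorem NminusSet_pair_ne_of_tails_pairwise_ne (hloop : ∀ v : V, ¬ A v v)
    (hsc : StronglyConnected A) (hnot4 : ¬ IsDirectedCycle (LineAdj A) 4)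
    (hdigon : NoDigonAtInDegreeOne (LineAdj A))
    (hab : a ≠ b) (hac : a ≠ c) (had : a ≠ d) (hbc : b ≠ c) (hbd : b ≠ d) (hcd : c ≠ d)
    (htab : a.val.1 ≠ b.val.1) (htac : a.val.1 ≠ c.val.1) (htad : a.val.1 ≠ d.val.1)
    (htbc : b.val.1 ≠ c.val.1) (htbd : b.val.1 ≠ d.val.1) (htcd : c.val.1 ≠ d.val.1) :
    NminusSet (LineAdj A) {a, b} ≠ NminusSet (LineAdj A) {c, d} := by
  intro heq
  wlog ha : a.val.2 = c.val.1 generalizing c d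
  · exact this had hac hbd hbc (Ne.symm hcd) htad htac htbd htbc (Ne.symm htcd)
      (Set.pair_comm c d ▸ heq)
      ((head_eq_tail_of_NminusSet_pair_eq heq (.inl rfl) hac had).resolve_left ha)
  have hina (f : LineVertex A) (hf : f.val.2 = a.val.1) : f = c ∨ f = d :=
    eq_or_eq_of_head_eq_tail_of_NminusSet_pair_eq heq (.inl rfl) htac htad hf
  have hinb (f : LineVertex A) (hf : f.val.2 = b.val.1) : f = c ∨ f = d :=
    eq_or_eq_of_head_eq_tail_of_NminusSet_pair_eq heq (.inr rfl) htbc htbd hf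
  have hinc (f : LineVertex A) (hf : f.val.2 = c.val.1) : f = a ∨ f = b :=
    eq_or_eq_of_head_eq_tail_of_NminusSet_pair_eq heq.symm (.inl rfl) htac.symm htbc.symm hf
  have hind (f : LineVertex A) (hf : f.val.2 = d.val.1) : f = a ∨ f = b :=
    eq_or_eq_of_head_eq_tail_of_NminusSet_pair_eq heq.symm (.inr rfl) htad.symm htbd.symm hf
  have hb : b.val.2 = d.val.1 := by
    have := tail_eq_head_of_NminusSet_pair_eq hloop hsc heq.symm (.inr rfl) htad.symm htbd.symm
    grind
  have hNc (f : LineVertex A) (hf : f.val.2 = c.val.1) : f = a := by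
    have := hinc f hf
    grind
  rcases head_eq_tail_of_NminusSet_pair_eq heq.symm (.inl rfl) (Ne.symm hac) (Ne.symm hbc)
    with hc | hc
  · exact false_of_digon hdigon ha hc hNc
  · have hd : d.val.2 = a.val.1 := by
      have := tail_eq_head_of_NminusSet_pair_eq hloop hsc heq (.inl rfl) htac htad
      grind
    refine hnot4 (isDirectedCycle_four hsc.lineAdj hab hac had hbc hbd hcd
      (Nminus_lineAdj_eq_singleton hd fun f hf => ?_)
      (Nminus_lineAdj_eq_singleton ha hNc)
      (Nminus_lineAdj_eq_singleton hc fun f hf => ?_)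
      (Nminus_lineAdj_eq_singleton hb fun f hf => ?_))
    · have := hina f hf; grind
    · have := hinb f hf; grind
    · have := hind f hf; grind

theorem NminusSet_pair_ne_of_disjoint (hloop : ∀ v : V, ¬ A v v) (hsc : StronglyConnected A)
    (hnot4 : ¬ IsDirectedCycle (LineAdj A) 4) (hdigon : NoDigonAtInDegreeOne (LineAdj A))
    (hII : ¬ HasConfigII (LineAdj A)) (hIII : ¬ HasConfigIII (LineAdj A))
    (hab : a ≠ b) (hac : a ≠ c) (had : a ≠ d) (hbc : b ≠ c) (hbd : b ≠ d) (hcd : c ≠ d) :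
    NminusSet (LineAdj A) {a, b} ≠ NminusSet (LineAdj A) {c, d} := by
  by_cases htab : a.val.1 = b.val.1
  · exact NminusSet_pair_ne_of_disjoint_of_tail_eq hloop hdigon hab hac had hbc hbd htab
  by_cases htcd : c.val.1 = d.val.1
  · exact fun heq => NminusSet_pair_ne_of_disjoint_of_tail_eq hloop hdigon hcd (Ne.symm hac)
      (Ne.symm hbc) (Ne.symm had) (Ne.symm hbd) htcd heq.symm
  have cross (a b c d : LineVertex A) :=
    @NminusSet_pair_ne_of_disjoint_of_cross_tail_eq V A a b c d hloop hsc hdigon hII hIII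
  by_cases htac : a.val.1 = c.val.1
  · exact cross a b c d hab hac had hbc hbd hcd htab htcd htac
  by_cases htad : a.val.1 = d.val.1
  · rw [Set.pair_comm c d]
    exact cross a b d c hab had hac hbd hbc (Ne.symm hcd) htab (Ne.symm htcd) htad
  by_cases htbc : b.val.1 = c.val.1
  · rw [Set.pair_comm a b]
    exact cross b a c d (Ne.symm hab) hbc hbd hac had hcd (Ne.symm htab) htcd htbc
  by_cases htbd : b.val.1 = d.val.1
  · rw [Set.pair_comm a b, Set.pair_comm c d]
    exact cross b a d c (Ne.symm hab) hbd hbc had hac (Ne.symm hcd) (Ne.symm htab)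
      (Ne.symm htcd) htbd
  exact NminusSet_pair_ne_of_tails_pairwise_ne hloop hsc hnot4 hdigon hab hac had hbc hbd hcd
    htab htac htad htbc htbd htcd

theorem eq_or_eq_of_NminusSet_pair_eq (hloop : ∀ v : V, ¬ A v v) (hsc : StronglyConnected A)
    (hnot4 : ¬ IsDirectedCycle (LineAdj A) 4) (hdigon : NoDigonAtInDegreeOne (LineAdj A))
    (hI : ¬ HasConfigI (LineAdj A)) (hII : ¬ HasConfigII (LineAdj A))
    (hIII : ¬ HasConfigIII (LineAdj A))
    (heq : NminusSet (LineAdj A) {a, b} = NminusSet (LineAdj A) {c, d}) : a = c ∨ a = d := by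
  by_contra! ⟨hac, had⟩
  rcases eq_or_ne b a with rfl | hba
  · exact hac (eq_of_NminusSet_pair_self_eq hloop hsc hdigon heq).symm
  rcases eq_or_ne d c with rfl | hdc
  · exact hac (eq_of_NminusSet_pair_self_eq hloop hsc hdigon heq.symm)
  rcases eq_or_ne b c with rfl | hbc
  · rw [Set.pair_comm a b] at heq
    exact had (eq_of_NminusSet_pair_eq_of_shared hloop hsc hdigon hI (Ne.symm hba) hdc heq)
  rcases eq_or_ne b d with rfl | hbd
  · rw [Set.pair_comm a b, Set.pair_comm c b] at heq
    exact hac (eq_of_NminusSet_pair_eq_of_shared hloop hsc hdigon hI (Ne.symm hba) hdc.symm heq)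
  exact NminusSet_pair_ne_of_disjoint hloop hsc hnot4 hdigon hII hIII (Ne.symm hba) hac had
    hbc hbd (Ne.symm hdc) heq

theorem pair_eq_of_NminusSet_pair_eq (hloop : ∀ v : V, ¬ A v v) (hsc : StronglyConnected A)
    (hnot4 : ¬ IsDirectedCycle (LineAdj A) 4) (hdigon : NoDigonAtInDegreeOne (LineAdj A))
    (hI : ¬ HasConfigI (LineAdj A)) (hII : ¬ HasConfigII (LineAdj A))
    (hIII : ¬ HasConfigIII (LineAdj A))
    (heq : NminusSet (LineAdj A) {a, b} = NminusSet (LineAdj A) {c, d}) :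
    ({a, b} : Set (LineVertex A)) = {c, d} := by
  have mem {a b c d : LineVertex A}
      (heq : NminusSet (LineAdj A) {a, b} = NminusSet (LineAdj A) {c, d}) :
      a ∈ ({c, d} : Set (LineVertex A)) :=
    eq_or_eq_of_NminusSet_pair_eq hloop hsc hnot4 hdigon hI hII hIII heq
  have hswap : NminusSet (LineAdj A) {b, a} = NminusSet (LineAdj A) {d, c} := by
    rwa [Set.pair_comm b a, Set.pair_comm d c]
  refine Set.Subset.antisymm (Set.pair_subset (mem heq) ?_) (Set.pair_subset (mem heq.symm) ?_)
  · rw [Set.pair_comm c d]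
    exact mem hswap
  · rw [Set.pair_comm a b]
    exact mem hswap.symm

end LineDigraph

/-- Characterization of line digraphs admitting a `(1,≤2)`-identifying code:
for a line digraph that is not a directed 4-cycle and whose vertices of in-degree 1
do not lie on digons, admitting a `(1,≤2)`-identifying code is equivalent to avoiding
the three forbidden configurations (i), (ii) and (iii). -/
theorem line_digraph_id_code_two_characterization {V : Type*} [Fintype V]
    (A : V → V → Prop) (hloop : ∀ v : V, ¬ A v v) (hsc : StronglyConnected A)
    (hnot4 : ¬ ∃ φ : LineVertex A ≃ ZMod 4,
      ∀ e f : LineVertex A, LineAdj A e f ↔ φ f = φ e + 1)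
    (hdigon : ∀ e : LineVertex A, (Nminus (LineAdj A) e).ncard = 1 →
      ¬ ∃ f : LineVertex A, LineAdj A e f ∧ LineAdj A f e) :
    AdmitsIdCode (LineAdj A) 2 ↔
      ((¬ ∃ x y z : LineVertex A, LineAdj A x y ∧ LineAdj A y z ∧ LineAdj A z x ∧
          (((Nminus (LineAdj A) x).ncard = 1 ∧ (Nminus (LineAdj A) y).ncard = 1) ∨
           ((Nminus (LineAdj A) y).ncard = 1 ∧ (Nminus (LineAdj A) z).ncard = 1) ∨
           ((Nminus (LineAdj A) x).ncard = 1 ∧ (Nminus (LineAdj A) z).ncard = 1))) ∧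
       (¬ ∃ x x' y y' : LineVertex A,
          x ≠ x' ∧ x ≠ y ∧ x ≠ y' ∧ x' ≠ y ∧ x' ≠ y' ∧ y ≠ y' ∧
          Nminus (LineAdj A) x = {y, y'} ∧ Nminus (LineAdj A) y' = {x'} ∧
          x ∈ Nminus (LineAdj A) x' ∩ Nminus (LineAdj A) y) ∧
       (¬ ∃ x x' y y' : LineVertex A,
          x ≠ x' ∧ x ≠ y ∧ x ≠ y' ∧ x' ≠ y ∧ x' ≠ y' ∧ y ≠ y' ∧
          Nminus (LineAdj A) x = {y, y'} ∧ Nminus (LineAdj A) y = {x, x'} ∧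
          (Nminus (LineAdj A) x' ∩ Nminus (LineAdj A) y').Nonempty)) := by
  constructor
  · intro hcode
    exact ⟨hcode.not_hasConfigI (LineDigraph.head_ne_tail hloop),
      hcode.not_hasConfigII LineDigraph.Nminus_lineAdj_eq,
      hcode.not_hasConfigIII LineDigraph.Nminus_lineAdj_eq⟩
  · rintro ⟨hI, hII, hIII⟩
    exact admitsIdCode_two_of_pair_eq fun a b c d =>
      LineDigraph.pair_eq_of_NminusSet_pair_eq hloop hsc hnot4 hdigon hI hII hIII
end

section
/- Let D be a strongly connected digraph without loops, with V(D) finite and minimum in-degree δ^-(D) ≥ 2. Then the second iterated line digraph L(L(D)) admits a (1,≤2)-identifying code. -/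
/-!
A vertex of `L(L(D))` is an arc of `G = L(D)`, and in the line digraph of any `G` the closed
in-neighbourhood `N⁻[X]` of a set `X` of arcs is `X` together with all arcs whose head is a tail of
an arc of `X`. As `D` is loopless with `δ⁻(D) ≥ 2`, so is `G`, and `G` has no transitive triangle.
Let `X`, `Y` be sets of at most two arcs of such a `G` with `N⁻[X] = N⁻[Y]`. A tail `γ` of `X` that
is not a tail of `Y` would force `Y` to be the two in-arcs `(g, γ)`, `(g', γ)` and, chasing the
in-arcs of `g'` and then of `g`, leads to a contradiction. So `X` and `Y` have the same tails, and
an arc of `X \ Y` would then give `X` three distinct tails.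
-/

theorem Set.eq_or_eq_of_ncard_le_two {α : Type*} [Finite α] {s : Set α} (hs : s.ncard ≤ 2)
    {a b c : α} (ha : a ∈ s) (hb : b ∈ s) (hab : a ≠ b) (hc : c ∈ s) : c = a ∨ c = b := by
  by_contra! h
  have := (Set.two_lt_ncard_iff s.toFinite).2 ⟨a, b, c, ha, hb, hc, hab, h.1.symm, h.2.symm⟩
  omega

theorem exists_adj_ne_of_two_le_ncard {V : Type*} {A : V → V → Prop}
    (hdeg : ∀ v, 2 ≤ (Nminus A v).ncard) (v w : V) : ∃ u, A u v ∧ u ≠ w :=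
  Set.exists_ne_of_one_lt_ncard (hdeg v) w

def TransTriangleFree {U : Type*} (R : U → U → Prop) : Prop :=
  ∀ u v w, R u v → R v w → ¬ R u w

section LineDigraph

variable {U : Type*} {R : U → U → Prop}

theorem lineAdj_irreflexive (hirr : ∀ u, ¬ R u u) : ∀ e, ¬ LineAdj R e e :=
  fun e he => hirr e.val.1 (he ▸ e.property)

theorem exists_lineAdj_ne (hdeg : ∀ v w, ∃ u, R u v ∧ u ≠ w) (e f : LineVertex R) :
    ∃ d, LineAdj R d e ∧ d ≠ f := by
  obtain ⟨u, hu, huf⟩ := hdeg e.val.1 f.val.1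
  exact ⟨⟨(u, e.val.1), hu⟩, rfl, fun h => huf (congrArg (·.val.1) h)⟩

theorem transTriangleFree_lineAdj (hirr : ∀ u, ¬ R u u) : TransTriangleFree (LineAdj R) :=
  fun _ f _ hef hfg heg => hirr f.val.1 (by
    have hff : f.val.2 = f.val.1 := hfg.trans (heg.symm.trans hef)
    exact hff ▸ f.property)

def arcTails (X : Set (LineVertex R)) : Set U := (fun e => e.val.1) '' X

theorem mem_NminusSet_lineAdj_iff {X : Set (LineVertex R)} {e : LineVertex R} :
    e ∈ NminusSet (LineAdj R) X ↔ e ∈ X ∨ e.val.2 ∈ arcTails X := by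
  simp only [NminusSet, NminusClosed, Nminus, LineAdj, arcTails, Set.mem_iUnion,
    Set.mem_insert_iff, Set.mem_ofPred_eq, Set.mem_image, exists_prop]
  constructor
  · rintro ⟨x, hx, rfl | h⟩
    exacts [Or.inl hx, Or.inr ⟨x, hx, h.symm⟩]
  · rintro (hx | ⟨x, hx, h⟩)
    exacts [⟨e, hx, Or.inl rfl⟩, ⟨x, hx, Or.inr h.symm⟩]

variable {X Y : Set (LineVertex R)}

theorem mem_or_head_mem_arcTails_iff (heq : NminusSet (LineAdj R) X = NminusSet (LineAdj R) Y)
    (e : LineVertex R) : e ∈ X ∨ e.val.2 ∈ arcTails X ↔ e ∈ Y ∨ e.val.2 ∈ arcTails Y := by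
  rw [← mem_NminusSet_lineAdj_iff, heq, mem_NminusSet_lineAdj_iff]

theorem mem_of_head_mem_arcTails_diff (heq : NminusSet (LineAdj R) X = NminusSet (LineAdj R) Y)
    {e : LineVertex R} (hX : e.val.2 ∈ arcTails X) (hY : e.val.2 ∉ arcTails Y) : e ∈ Y :=
  ((mem_or_head_mem_arcTails_iff heq e).1 (Or.inr hX)).resolve_right hY

variable [Finite U]

/-- A tail `v` of `X` that is not a tail of `Y` has at least two in-arcs, all of them in `Y`. -/
theorem head_eq_of_mem_arcTails_diff (hdeg : ∀ v w, ∃ u, R u v ∧ u ≠ w) (hY : Y.ncard ≤ 2)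
    (heq : NminusSet (LineAdj R) X = NminusSet (LineAdj R) Y) {v : U} (hvX : v ∈ arcTails X)
    (hvY : v ∉ arcTails Y) {y : LineVertex R} (hy : y ∈ Y) : y.val.2 = v := by
  obtain ⟨r₁, hr₁, -⟩ := hdeg v v
  obtain ⟨r₂, hr₂, hr₂₁⟩ := hdeg v r₁
  have hr₁Y := mem_of_head_mem_arcTails_diff heq (e := ⟨(r₁, v), hr₁⟩) hvX hvY
  have hr₂Y := mem_of_head_mem_arcTails_diff heq (e := ⟨(r₂, v), hr₂⟩) hvX hvY
  rcases Set.eq_or_eq_of_ncard_le_two hY hr₁Y hr₂Y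
    (fun h => hr₂₁ (congrArg (·.val.1) h).symm) hy with rfl | rfl <;> rfl

theorem arcTails_subset_of_NminusSet_eq (hirr : ∀ u, ¬ R u u)
    (hdeg : ∀ v w, ∃ u, R u v ∧ u ≠ w) (htri : TransTriangleFree R)
    (hX : X.ncard ≤ 2) (hY : Y.ncard ≤ 2)
    (heq : NminusSet (LineAdj R) X = NminusSet (LineAdj R) Y) : arcTails X ⊆ arcTails Y := by
  rintro _ ⟨x, hx, rfl⟩
  by_contra hγY
  set γ := x.val.1
  have hγX : γ ∈ arcTails X := ⟨x, hx, rfl⟩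
  have hxY : x ∉ Y := fun h => hγY ⟨x, h, rfl⟩
  obtain ⟨y, hy, hyx⟩ := ((mem_or_head_mem_arcTails_iff heq x).1 (Or.inl hx)).resolve_left hxY
  set g := x.val.2
  have hgY : g ∈ arcTails Y := ⟨y, hy, hyx⟩
  have hgγ : R g γ := by
    simpa [hyx, head_eq_of_mem_arcTails_diff hdeg hY heq hγX hγY hy] using y.property
  obtain ⟨g', hg'γ, hg'g⟩ := hdeg γ g
  have hg'Y : g' ∈ arcTails Y :=
    ⟨_, mem_of_head_mem_arcTails_diff heq (e := ⟨(g', γ), hg'γ⟩) hγX hγY, rfl⟩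
  obtain ⟨x', hx', hx'g'⟩ : g' ∈ arcTails X := by
    by_contra hg'X
    exact hg'g (head_eq_of_mem_arcTails_diff hdeg hX heq.symm hg'Y hg'X hx).symm
  have hxx' : x ≠ x' := fun h => hirr g' (by simpa [← hx'g', ← h] using hg'γ)
  -- An in-arc `(s, g)` with `s ≠ γ` lies in `N⁻[Y] = N⁻[X]`, which has no room for it.
  obtain ⟨s, hsg, hsγ⟩ := hdeg g γ
  rcases (mem_or_head_mem_arcTails_iff heq ⟨(s, g), hsg⟩).2 (Or.inr hgY) with hs | ⟨z, hz, hzg⟩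
  · rcases Set.eq_or_eq_of_ncard_le_two hX hx hx' hxx' hs with h | h
    · exact hsγ (congrArg (·.val.1) h)
    · exact htri g' g γ (by simpa [← hx'g', ← h] using hsg) hgγ hg'γ
  · rcases Set.eq_or_eq_of_ncard_le_two hX hx hx' hxx' hz with rfl | rfl
    · exact hirr γ (by simpa [show g = γ from hzg.symm] using hgγ)
    · exact hg'g (hx'g'.symm.trans hzg)

theorem subset_of_arcTails_eq (hirr : ∀ u, ¬ R u u) (hX : X.ncard ≤ 2)
    (heq : NminusSet (LineAdj R) X = NminusSet (LineAdj R) Y)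
    (htails : arcTails X = arcTails Y) : X ⊆ Y := by
  intro p hp
  by_contra hpY
  have hp₂ : p.val.2 ∈ arcTails X :=
    htails ▸ ((mem_or_head_mem_arcTails_iff heq p).1 (Or.inl hp)).resolve_left hpY
  obtain ⟨x₂, hx₂, hx₂p⟩ := hp₂
  obtain ⟨y, hy, hyp⟩ : p.val.1 ∈ arcTails Y := htails ▸ ⟨p, hp, rfl⟩
  have hp₁₂ : p.val.1 ≠ p.val.2 := fun h => hirr _ (h ▸ p.property)
  have hyp₂ : y.val.2 ≠ p.val.2 := fun h => hpY (Subtype.ext (Prod.ext hyp h) ▸ hy)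
  have hpx₂ : p ≠ x₂ := fun h => hp₁₂ (by subst h; exact hx₂p)
  -- A third arc of `X`, with tail `p.val.1` or `y.val.2`.
  obtain ⟨z, hz, hzp, hzx₂⟩ : ∃ z ∈ X, z ≠ p ∧ z ≠ x₂ := by
    rcases (mem_or_head_mem_arcTails_iff heq y).2 (Or.inl hy) with hyX | ⟨x₃, hx₃, hx₃y⟩
    · refine ⟨y, hyX, fun h => hpY (h ▸ hy), fun h => hp₁₂ ?_⟩
      rw [← hyp, h, hx₂p]
    · refine ⟨x₃, hx₃, fun h => hirr y.val.1 ?_, fun h => hyp₂ ?_⟩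
      · simpa [← hx₃y, h, hyp] using y.property
      · rw [← hx₃y, h, hx₂p]
  rcases Set.eq_or_eq_of_ncard_le_two hX hp hx₂ hpx₂ hz with h | h
  exacts [hzp h, hzx₂ h]

theorem admitsIdCode_two_lineAdj (hirr : ∀ u, ¬ R u u) (hdeg : ∀ v w, ∃ u, R u v ∧ u ≠ w)
    (htri : TransTriangleFree R) : AdmitsIdCode (LineAdj R) 2 := by
  intro X Y _ _ hX hY hne heq
  have htails := (arcTails_subset_of_NminusSet_eq hirr hdeg htri hX hY heq).antisymm
    (arcTails_subset_of_NminusSet_eq hirr hdeg htri hY hX heq.symm)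
  exact hne ((subset_of_arcTails_eq hirr hX heq htails).antisymm
    (subset_of_arcTails_eq hirr hY heq.symm htails.symm))

end LineDigraph

theorem second_line_digraph_admits_id_code_two_general {V : Type*} [Fintype V]
    (A : V → V → Prop) (hloop : ∀ v : V, ¬ A v v)
    (hdeg : ∀ v : V, 2 ≤ (Nminus A v).ncard) :
    AdmitsIdCode (LineAdj (LineAdj A)) 2 :=
  admitsIdCode_two_lineAdj (lineAdj_irreflexive hloop)
    (exists_lineAdj_ne (exists_adj_ne_of_two_le_ncard hdeg)) (transTriangleFree_lineAdj hloop)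

/-- The second iterated line digraph of a strongly connected loopless digraph of minimum
in-degree at least 2 admits a `(1,≤2)`-identifying code. -/
theorem second_line_digraph_admits_id_code_two {V : Type*} [Fintype V]
    (A : V → V → Prop) (hloop : ∀ v : V, ¬ A v v) (hsc : StronglyConnected A)
    (hdeg : ∀ v : V, 2 ≤ (Nminus A v).ncard) :
    AdmitsIdCode (LineAdj (LineAdj A)) 2 :=
  second_line_digraph_admits_id_code_two_general A hloop hdeg
end

section
/- Let D be a strongly connected digraph without loops, with V(D) finite and minimum in-degree δ^-(D) ≥ 3. Then the line digraph LD of D admits a (1,≤2)-identifying code. -/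
/-!
In the line digraph, `N⁻[S]` consists of `S` together with all arcs whose head is the tail of an
arc of `S`. If `N⁻[X] = N⁻[Y]` and `f ∈ X`, the at least three arcs into the tail of `f` lie in
`N⁻[Y]`, so they cannot all belong to `Y` when `|Y| ≤ 2`: some arc of `Y` has the same tail as `f`.
Transferring tails back and forth between `X` and `Y` in this way, an arc `f ∈ X \ Y` forces
`X = {f, g}` with `g` starting at the head of `f`, and an arc `y ∈ Y` starting at the tail of `f`
then has nowhere to lie in `N⁻[X]` without creating a loop or being equal to `f`.
-/

section LineDigraph

variable {V : Type*} {A : V → V → Prop}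

theorem mem_NminusSet_lineAdj {S : Set (LineVertex A)} {e : LineVertex A} :
    e ∈ NminusSet (LineAdj A) S ↔ e ∈ S ∨ ∃ f ∈ S, e.val.2 = f.val.1 := by
  simp only [NminusSet, NminusClosed, Nminus, LineAdj, Set.mem_iUnion, Set.mem_insert_iff,
    Set.mem_ofPred_eq, exists_prop]
  constructor
  · rintro ⟨f, hf, rfl | he⟩
    exacts [Or.inl hf, Or.inr ⟨f, hf, he⟩]
  · rintro (he | ⟨f, hf, he⟩)
    exacts [⟨e, he, Or.inl rfl⟩, ⟨f, hf, Or.inr he⟩]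

theorem LineVertex.fst_ne_snd (hloop : ∀ v, ¬ A v v) (e : LineVertex A) : e.val.1 ≠ e.val.2 :=
  fun h => hloop e.val.2 (h ▸ e.2)

theorem ncard_Nminus_le_of_forall_mem [Finite V] {Y : Set (LineVertex A)} {t : V}
    (hY : ∀ e : LineVertex A, e.val.2 = t → e ∈ Y) : (Nminus A t).ncard ≤ Y.ncard := by
  have hN : Nminus A t = (fun e : LineVertex A => e.val.1) '' {e | e.val.2 = t} := by
    ext u
    exact ⟨fun hu => ⟨⟨(u, t), hu⟩, rfl, rfl⟩, by rintro ⟨e, rfl, rfl⟩; exact e.2⟩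
  rw [hN]
  exact (Set.ncard_image_le (Set.toFinite _)).trans (Set.ncard_le_ncard hY)

theorem exists_fst_eq_of_NminusSet_eq [Finite V] {X Y : Set (LineVertex A)}
    (heq : NminusSet (LineAdj A) X = NminusSet (LineAdj A) Y) {f : LineVertex A} (hf : f ∈ X)
    (hY : Y.ncard < (Nminus A f.val.1).ncard) : ∃ g ∈ Y, g.val.1 = f.val.1 := by
  by_contra! hno
  refine hY.not_ge (ncard_Nminus_le_of_forall_mem fun e he => ?_)
  have heN : e ∈ NminusSet (LineAdj A) Y := heq ▸ mem_NminusSet_lineAdj.2 (Or.inr ⟨f, hf, he⟩)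
  obtain heY | ⟨g, hgY, hg⟩ := mem_NminusSet_lineAdj.1 heN
  · exact heY
  · exact absurd (hg.symm.trans he) (hno g hgY)

theorem subset_of_NminusSet_lineAdj_eq [Finite V] (hloop : ∀ v, ¬ A v v)
    (hdeg : ∀ v, 3 ≤ (Nminus A v).ncard) {X Y : Set (LineVertex A)}
    (hX : X.ncard ≤ 2) (hY : Y.ncard ≤ 2)
    (heq : NminusSet (LineAdj A) X = NminusSet (LineAdj A) Y) : X ⊆ Y := by
  have transfer : ∀ {S T : Set (LineVertex A)},
      NminusSet (LineAdj A) S = NminusSet (LineAdj A) T → T.ncard ≤ 2 →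
        ∀ f ∈ S, ∃ g ∈ T, g.val.1 = f.val.1 := fun heq hT f hf =>
    exists_fst_eq_of_NminusSet_eq heq hf (by have := hdeg f.val.1; omega)
  intro f hfX
  by_contra hfY
  obtain ⟨h, hhY, hfh⟩ : ∃ h ∈ Y, f.val.2 = h.val.1 :=
    (mem_NminusSet_lineAdj.1 (heq ▸ mem_NminusSet_lineAdj.2 (Or.inl hfX))).resolve_left hfY
  obtain ⟨g, hgX, hgh⟩ := transfer heq.symm hX h hhY
  have hgf : g.val.1 = f.val.2 := hgh.trans hfh.symm
  have hg_ne_f : g ≠ f := fun he => LineVertex.fst_ne_snd hloop f (he ▸ hgf)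
  have hXfg : {f, g} = X := Set.eq_of_subset_of_ncard_le
    (Set.insert_subset hfX (Set.singleton_subset_iff.2 hgX)) (by rwa [Set.ncard_pair hg_ne_f.symm])
  obtain ⟨y, hyY, hyf⟩ := transfer heq hY f hfX
  have hyN : y ∈ NminusSet (LineAdj A) {f, g} :=
    hXfg ▸ heq ▸ mem_NminusSet_lineAdj.2 (Or.inl hyY)
  simp only [mem_NminusSet_lineAdj, Set.mem_insert_iff, Set.mem_singleton_iff,
    exists_eq_or_imp, exists_eq_left] at hyN
  rcases hyN with (rfl | rfl) | hy | hy
  · exact hfY hyY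
  · exact LineVertex.fst_ne_snd hloop f (hyf.symm.trans hgf)
  · exact LineVertex.fst_ne_snd hloop y (hyf.trans hy.symm)
  · exact hfY (Subtype.ext (Prod.ext hyf (hy.trans hgf)) ▸ hyY)

end LineDigraph

theorem line_digraph_admits_id_code_two_general {V : Type*} [Fintype V]
    (A : V → V → Prop) (hloop : ∀ v : V, ¬ A v v)
    (hdeg : ∀ v : V, 3 ≤ (Nminus A v).ncard) :
    AdmitsIdCode (LineAdj A) 2 := fun _ _ _ _ hX hY hne heq =>
  hne ((subset_of_NminusSet_lineAdj_eq hloop hdeg hX hY heq).antisymm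
    (subset_of_NminusSet_lineAdj_eq hloop hdeg hY hX heq.symm))

/-- The line digraph of a strongly connected loopless digraph of minimum in-degree at
least 3 admits a `(1,≤2)`-identifying code. -/
theorem line_digraph_admits_id_code_two {V : Type*} [Fintype V]
    (A : V → V → Prop) (hloop : ∀ v : V, ¬ A v v) (hsc : StronglyConnected A)
    (hdeg : ∀ v : V, 3 ≤ (Nminus A v).ncard) :
    AdmitsIdCode (LineAdj A) 2 :=
  line_digraph_admits_id_code_two_general A hloop hdeg
end

section
/- Let D be a strongly connected digraph without loops, with V(D) finite and minimum in-degree δ^-(D) ≥ 2. Then every (1,≤1)-identifying code C of the line digraph LD satisfies |C| ≥ |A(D)| − |V(D)|; in particular, the identifying number satisfies γ^ID(LD) ≥ |A(D)| − |V(D)|. -/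
/-!
An arc `uv` of `D` has in-neighbourhood `{arcs with head u}` in `LD`, which depends on the
tail `u` alone. So if two arcs with the same tail both lie outside an identifying code `C`,
their closed in-neighbourhoods meet `C` in the same set; hence the arcs outside `C` have
pairwise distinct tails, and `|A(D)| - |C| ≤ |V(D)|`. When every in-degree is at least 2 the
whole arc set is an identifying code of `LD`, so `γ^ID(LD)` is the size of an actual code and
inherits the bound.
-/

theorem IsIdCode.eq_of_notMem_of_nminus_eq {W : Type*} {R : W → W → Prop} {C : Set W}
    (hC : IsIdCode R C) {x y : W} (hx : x ∉ C) (hy : y ∉ C)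
    (hxy : Nminus R x = Nminus R y) : x = y := by
  by_contra hne
  apply hC.2 x y hne
  rw [NminusClosed, NminusClosed, hxy, Set.insert_inter_of_notMem hx,
    Set.insert_inter_of_notMem hy]

theorem le_idNumber {W : Type*} {R : W → W → Prop} {n : ℕ} (hex : ∃ C, IsIdCode R C)
    (hle : ∀ C, IsIdCode R C → n ≤ C.ncard) : n ≤ idNumber R := by
  obtain ⟨C, hC, hCn⟩ := Nat.sInf_mem (s := {n | ∃ C : Set W, IsIdCode R C ∧ C.ncard = n})
    (hex.elim fun C hC => ⟨C.ncard, C, hC, rfl⟩)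
  rw [idNumber, ← hCn]
  exact hle C hC

section LineDigraph

variable {V : Type*} {A : V → V → Prop}

theorem mem_nminus_lineAdj {e f : LineVertex A} : f ∈ Nminus (LineAdj A) e ↔ f.val.2 = e.val.1 :=
  Iff.rfl

theorem nminus_lineAdj_eq_of_fst_eq {e f : LineVertex A} (h : e.val.1 = f.val.1) :
    Nminus (LineAdj A) e = Nminus (LineAdj A) f := by
  ext g
  rw [mem_nminus_lineAdj, mem_nminus_lineAdj, h]

theorem IsIdCode.injOn_fst_compl {C : Set (LineVertex A)} (hC : IsIdCode (LineAdj A) C) :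
    Set.InjOn (fun e : LineVertex A => e.val.1) Cᶜ := fun _ he _ hf hef =>
  hC.eq_of_notMem_of_nminus_eq he hf (nminus_lineAdj_eq_of_fst_eq hef)

theorem IsIdCode.ncard_arcs_sub_card_le [Finite V] {C : Set (LineVertex A)}
    (hC : IsIdCode (LineAdj A) C) : {p : V × V | A p.1 p.2}.ncard - Nat.card V ≤ C.ncard := by
  have hcompl : Cᶜ.ncard ≤ Nat.card V := by
    rw [← Set.ncard_univ V]
    exact Set.ncard_le_ncard_of_injOn _ (fun _ _ => Set.mem_univ _) hC.injOn_fst_compl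
  have hsplit : C.ncard + Cᶜ.ncard = {p : V × V | A p.1 p.2}.ncard := by
    rw [Set.ncard_add_ncard_compl]
    exact Nat.card_coe_set_eq _
  omega

theorem isIdCode_univ_lineAdj (hdeg : ∀ v : V, 2 ≤ (Nminus A v).ncard) :
    IsIdCode (LineAdj A) Set.univ := by
  refine ⟨fun _ => Or.inl trivial, fun x y hxy hEq => ?_⟩
  simp only [Set.inter_univ] at hEq
  have head_eq_of_mem {g : LineVertex A} (hg : g ∈ NminusClosed (LineAdj A) x) (hgy : g ≠ y) :
      g.val.2 = y.val.1 := by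
    rw [hEq] at hg
    exact hg.resolve_left hgy
  by_cases htail : x.val.1 = y.val.1
  · -- both arcs would have to be the loop at their common tail
    have hx : x.val.2 = y.val.1 := head_eq_of_mem (Set.mem_insert x _) hxy
    have hy : y.val.2 = x.val.1 := by
      have hyx : y ∈ NminusClosed (LineAdj A) x := hEq ▸ Set.mem_insert y _
      exact hyx.resolve_left hxy.symm
    exact hxy (Subtype.ext (Prod.ext htail (hx.trans (htail.symm.trans hy.symm))))
  · obtain ⟨u, hu, huy⟩ := Set.exists_ne_of_one_lt_ncard (hdeg x.val.1) y.val.1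
    let g : LineVertex A := ⟨(u, x.val.1), hu⟩
    have hgy : g ≠ y := fun h => huy (congrArg (fun e : LineVertex A => e.val.1) h)
    exact htail (head_eq_of_mem (Or.inr rfl : g ∈ NminusClosed (LineAdj A) x) hgy)

end LineDigraph

theorem line_digraph_id_number_lower_bound_general {V : Type*} [Fintype V]
    (A : V → V → Prop)
    (hdeg : ∀ v : V, 2 ≤ (Nminus A v).ncard) :
    (∀ C : Set (LineVertex A), IsIdCode (LineAdj A) C →
      {p : V × V | A p.1 p.2}.ncard - Nat.card V ≤ C.ncard) ∧
    {p : V × V | A p.1 p.2}.ncard - Nat.card V ≤ idNumber (LineAdj A) :=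
  ⟨fun _ hC => hC.ncard_arcs_sub_card_le,
    le_idNumber ⟨_, isIdCode_univ_lineAdj hdeg⟩ fun _ hC => hC.ncard_arcs_sub_card_le⟩

/-- Every `(1,≤1)`-identifying code of the line digraph of a strongly connected loopless
digraph of minimum in-degree at least 2 has size at least `|A(D)| - |V(D)|`; in
particular the identifying number of the line digraph is at least `|A(D)| - |V(D)|`. -/
theorem line_digraph_id_number_lower_bound {V : Type*} [Fintype V]
    (A : V → V → Prop) (hloop : ∀ v : V, ¬ A v v) (hsc : StronglyConnected A)
    (hdeg : ∀ v : V, 2 ≤ (Nminus A v).ncard) :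
    (∀ C : Set (LineVertex A), IsIdCode (LineAdj A) C →
      {p : V × V | A p.1 p.2}.ncard - Nat.card V ≤ C.ncard) ∧
    {p : V × V | A p.1 p.2}.ncard - Nat.card V ≤ idNumber (LineAdj A) :=
  line_digraph_id_number_lower_bound_general A hdeg
end

section
/- Let D be a strongly connected digraph without loops, with V(D) finite of order at least 3, and let C ⊆ A(D). Then C is an arc-identifying code of D if and only if C satisfies both: (i) for every vertex v, |ω^+(v) \ C| ≤ 1, and if |ω^+(v) \ C| = 1 then ω^-(v) ∩ C ≠ ∅; and (ii) for every arc (u,v) ∈ C, if (v,u) ∈ C or |ω^+(v) \ C| = 1, then ((ω^-(v) ∪ ω^-(u)) \ {(u,v),(v,u)}) ∩ C ≠ ∅. -/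
/-!
An arc `p = (u, v)` is recognised by its trace `I(p) = ({p} ∪ ω⁻(u)) ∩ C`. Arcs out of `u` that
miss `C` all have the trace `ω⁻(u) ∩ C`, which forces (i); and (ii) is what keeps `I(uv)` apart
from `I(vu)`, resp. from the trace `ω⁻(v) ∩ C` of the arc leaving `v` outside `C`.
Conversely, an element of `I(p) = I(q)` other than `p` and `q` is an arc into both tails, so `p`
and `q` share their tail, which (i) and looplessness rule out. Such an element is provided by (i)
if `p, q ∉ C`, and by (ii) if `p ∈ C`: then `p ∈ I(q)` makes the head of `p` the tail of `q`.
-/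

theorem ncard_eq_one_of_le_one_of_mem {α : Type*} [Finite α] {s : Set α} {a : α}
    (hs : s.ncard ≤ 1) (ha : a ∈ s) : s.ncard = 1 :=
  le_antisymm hs ((Set.ncard_pos).mpr ⟨a, ha⟩)

section ArcIdCode

variable {V : Type*} {A : V → V → Prop} {C : Set (V × V)} {p q c : V × V}

def arcTrace (A : V → V → Prop) (C : Set (V × V)) (p : V × V) : Set (V × V) :=
  insert p (omegaMinus A p.1) ∩ C

def ArcIdConditionI (A : V → V → Prop) (C : Set (V × V)) : Prop :=
  ∀ v : V, (omegaPlus A v \ C).ncard ≤ 1 ∧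
    ((omegaPlus A v \ C).ncard = 1 → (omegaMinus A v ∩ C).Nonempty)

def ArcIdConditionII (A : V → V → Prop) (C : Set (V × V)) : Prop :=
  ∀ u v : V, (u, v) ∈ C → ((v, u) ∈ C ∨ (omegaPlus A v \ C).ncard = 1) →
    (((omegaMinus A v ∪ omegaMinus A u) \ {(u, v), (v, u)}) ∩ C).Nonempty

theorem isArcIdCode_iff :
    IsArcIdCode A C ↔ (∀ p : V × V, A p.1 p.2 → (arcTrace A C p).Nonempty) ∧
      ∀ p q : V × V, A p.1 p.2 → A q.1 q.2 → p ≠ q → arcTrace A C p ≠ arcTrace A C q :=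
  Iff.rfl

theorem mem_arcTrace_self (hp : p ∈ C) : p ∈ arcTrace A C p :=
  ⟨Set.mem_insert _ _, hp⟩

theorem mem_arcTrace_of_mem_omegaMinus (hc : c ∈ omegaMinus A p.1) (hcC : c ∈ C) :
    c ∈ arcTrace A C p :=
  ⟨Set.mem_insert_of_mem _ hc, hcC⟩

theorem arcTrace_of_notMem (hp : p ∉ C) : arcTrace A C p = omegaMinus A p.1 ∩ C :=
  Set.insert_inter_of_notMem hp

theorem mem_omegaMinus_of_mem_arcTrace (hc : c ∈ arcTrace A C p) (hcp : c ≠ p) :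
    c ∈ omegaMinus A p.1 :=
  (Set.mem_insert_iff.mp hc.1).resolve_left hcp

theorem snd_eq_fst_of_arcTrace_eq (h : arcTrace A C p = arcTrace A C q) (hp : p ∈ C)
    (hpq : p ≠ q) : p.2 = q.1 :=
  (mem_omegaMinus_of_mem_arcTrace (h ▸ mem_arcTrace_self hp) hpq).2

theorem fst_eq_of_arcTrace_eq (h : arcTrace A C p = arcTrace A C q) (hcC : c ∈ C)
    (hc : c ∈ omegaMinus A p.1 ∪ omegaMinus A q.1) (hcp : c ≠ p) (hcq : c ≠ q) :
    p.1 = q.1 := by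
  have hcp' : c ∈ arcTrace A C p := by
    rcases hc with hc | hc
    · exact mem_arcTrace_of_mem_omegaMinus hc hcC
    · exact h ▸ mem_arcTrace_of_mem_omegaMinus hc hcC
  have hcq' : c ∈ arcTrace A C q := h ▸ hcp'
  exact (mem_omegaMinus_of_mem_arcTrace hcp' hcp).2.symm.trans
    (mem_omegaMinus_of_mem_arcTrace hcq' hcq).2

theorem arcTrace_eq_pair_inter {u v : V} (hsub : omegaMinus A u ∩ C ⊆ {(u, v), (v, u)})
    (hvu : (v, u) ∈ C → A v u) : arcTrace A C (u, v) = {(u, v), (v, u)} ∩ C := by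
  refine Set.Subset.antisymm (fun x hx => ⟨?_, hx.2⟩) fun x ⟨hx, hxC⟩ => ⟨?_, hxC⟩
  · rcases Set.mem_insert_iff.mp hx.1 with rfl | hxu
    · exact Set.mem_insert _ _
    · exact hsub ⟨hxu, hx.2⟩
  · rcases hx with rfl | rfl
    · exact Set.mem_insert _ _
    · exact Set.mem_insert_of_mem _ ⟨hvu hxC, rfl⟩

namespace IsArcIdCode

theorem ncard_omegaPlus_diff_le_one [Finite V] (hcode : IsArcIdCode A C) (v : V) :
    (omegaPlus A v \ C).ncard ≤ 1 := by
  refine (Set.ncard_le_one).mpr fun a ha b hb => ?_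
  by_contra hab
  apply (isArcIdCode_iff.mp hcode).2 a b ha.1.1 hb.1.1 hab
  rw [arcTrace_of_notMem ha.2, arcTrace_of_notMem hb.2, ha.1.2, hb.1.2]

theorem omegaMinus_inter_nonempty (hcode : IsArcIdCode A C) {v : V}
    (hv : (omegaPlus A v \ C).ncard = 1) : (omegaMinus A v ∩ C).Nonempty := by
  obtain ⟨a, ⟨ha, rfl⟩, haC⟩ := Set.nonempty_of_ncard_ne_zero (hv ▸ one_ne_zero)
  obtain ⟨c, hc⟩ := (isArcIdCode_iff.mp hcode).1 a ha
  exact ⟨c, by rwa [← arcTrace_of_notMem haC]⟩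

theorem arcIdConditionI [Finite V] (hcode : IsArcIdCode A C) : ArcIdConditionI A C :=
  fun v => ⟨hcode.ncard_omegaPlus_diff_le_one v, fun hv => hcode.omegaMinus_inter_nonempty hv⟩

theorem arcIdConditionII (hloop : ∀ v : V, ¬ A v v) (hC : ∀ p ∈ C, A p.1 p.2)
    (hcode : IsArcIdCode A C) : ArcIdConditionII A C := by
  obtain ⟨-, hsep⟩ := isArcIdCode_iff.mp hcode
  intro u v huv hcase
  by_contra hemp
  have hsub : (omegaMinus A v ∪ omegaMinus A u) ∩ C ⊆ {(u, v), (v, u)} := fun x hx =>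
    by_contra fun hP => hemp ⟨x, ⟨hx.1, hP⟩, hx.2⟩
  have huvA : A u v := hC _ huv
  have hne : u ≠ v := fun h => hloop v (h ▸ huvA)
  have htrace_uv : arcTrace A C (u, v) = {(u, v), (v, u)} ∩ C :=
    arcTrace_eq_pair_inter (fun x hx => hsub ⟨Or.inr hx.1, hx.2⟩) (hC _)
  by_cases hvu : (v, u) ∈ C
  · have htrace_vu : arcTrace A C (v, u) = {(v, u), (u, v)} ∩ C :=
      arcTrace_eq_pair_inter (fun x hx => Set.pair_comm _ _ ▸ hsub ⟨Or.inl hx.1, hx.2⟩)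
        fun _ => huvA
    refine hsep (u, v) (v, u) huvA (hC _ hvu) (fun h => hne (congrArg Prod.fst h)) ?_
    rw [htrace_uv, htrace_vu, Set.pair_comm]
  · obtain ⟨a, ⟨ha, hav⟩, haC⟩ :=
      Set.nonempty_of_ncard_ne_zero ((hcase.resolve_left hvu) ▸ one_ne_zero)
    refine hsep (u, v) a huvA ha (fun h => hne (hav ▸ congrArg Prod.fst h)) ?_
    rw [htrace_uv, arcTrace_of_notMem haC, hav]
    refine Set.Subset.antisymm (fun x ⟨hx, hxC⟩ => ⟨?_, hxC⟩) fun x hx => ⟨?_, hx.2⟩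
    · rcases hx with rfl | rfl
      · exact ⟨huvA, rfl⟩
      · exact absurd hxC hvu
    · exact hsub ⟨Or.inl hx.1, hx.2⟩

end IsArcIdCode

namespace ArcIdConditionI

theorem arcTrace_nonempty [Finite V] (h1 : ArcIdConditionI A C) (hp : A p.1 p.2) :
    (arcTrace A C p).Nonempty := by
  by_cases hpC : p ∈ C
  · exact ⟨p, mem_arcTrace_self hpC⟩
  · rw [arcTrace_of_notMem hpC]
    exact (h1 p.1).2 (ncard_eq_one_of_le_one_of_mem (h1 p.1).1 ⟨⟨hp, rfl⟩, hpC⟩)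

theorem arcTrace_ne_of_fst_eq [Finite V] (hloop : ∀ v : V, ¬ A v v) (h1 : ArcIdConditionI A C)
    (hp : A p.1 p.2) (hq : A q.1 q.2) (hpq : p ≠ q) (hfst : p.1 = q.1) :
    arcTrace A C p ≠ arcTrace A C q := by
  intro h
  by_cases hpC : p ∈ C
  · exact hloop p.1 ((snd_eq_fst_of_arcTrace_eq h hpC hpq).trans hfst.symm ▸ hp)
  by_cases hqC : q ∈ C
  · exact hloop q.1 ((snd_eq_fst_of_arcTrace_eq h.symm hqC hpq.symm).trans hfst ▸ hq)
  exact hpq <| (Set.ncard_le_one).mp (h1 p.1).1 p ⟨⟨hp, rfl⟩, hpC⟩ q ⟨⟨hq, hfst.symm⟩, hqC⟩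

theorem fst_eq_of_arcTrace_eq [Finite V] (h1 : ArcIdConditionI A C) (hp : A p.1 p.2)
    (hpC : p ∉ C) (hqC : q ∉ C) (h : arcTrace A C p = arcTrace A C q) : p.1 = q.1 := by
  obtain ⟨c, hc, hcC⟩ := (h1 p.1).2 (ncard_eq_one_of_le_one_of_mem (h1 p.1).1 ⟨⟨hp, rfl⟩, hpC⟩)
  exact _root_.fst_eq_of_arcTrace_eq h hcC (Or.inl hc) (ne_of_mem_of_not_mem hcC hpC)
    (ne_of_mem_of_not_mem hcC hqC)

end ArcIdConditionI

theorem ArcIdConditionII.fst_eq_of_arcTrace_eq [Finite V] (h1 : ArcIdConditionI A C)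
    (h2 : ArcIdConditionII A C) (hpC : p ∈ C) (hq : A q.1 q.2) (hpq : p ≠ q)
    (h : arcTrace A C p = arcTrace A C q) : p.1 = q.1 := by
  obtain ⟨u, v⟩ := p
  have hvq : v = q.1 := snd_eq_fst_of_arcTrace_eq h hpC hpq
  by_cases hqC : q ∈ C
  · have hqvu : q = (v, u) := Prod.ext hvq.symm (snd_eq_fst_of_arcTrace_eq h.symm hqC hpq.symm)
    subst hqvu
    obtain ⟨c, ⟨hc, hcpq⟩, hcC⟩ := h2 u v hpC (Or.inl hqC)
    simp only [Set.mem_insert_iff, Set.mem_singleton_iff, not_or] at hcpq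
    exact _root_.fst_eq_of_arcTrace_eq h hcC (Set.union_comm _ _ ▸ hc) hcpq.1 hcpq.2
  · have hone : (omegaPlus A v \ C).ncard = 1 :=
      ncard_eq_one_of_le_one_of_mem (h1 v).1 ⟨⟨hq, hvq.symm⟩, hqC⟩
    obtain ⟨c, ⟨hc, hcpq⟩, hcC⟩ := h2 u v hpC (Or.inr hone)
    simp only [Set.mem_insert_iff, Set.mem_singleton_iff, not_or] at hcpq
    exact _root_.fst_eq_of_arcTrace_eq h hcC (hvq ▸ Set.union_comm _ _ ▸ hc) hcpq.1
      (ne_of_mem_of_not_mem hcC hqC)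

theorem arcTrace_ne_of_arcIdConditions [Finite V] (hloop : ∀ v : V, ¬ A v v)
    (h1 : ArcIdConditionI A C) (h2 : ArcIdConditionII A C) (hp : A p.1 p.2) (hq : A q.1 q.2)
    (hpq : p ≠ q) : arcTrace A C p ≠ arcTrace A C q := by
  intro h
  refine h1.arcTrace_ne_of_fst_eq hloop hp hq hpq ?_ h
  by_cases hpC : p ∈ C
  · exact h2.fst_eq_of_arcTrace_eq h1 hpC hq hpq h
  by_cases hqC : q ∈ C
  · exact (h2.fst_eq_of_arcTrace_eq h1 hqC hp hpq.symm h.symm).symm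
  exact h1.fst_eq_of_arcTrace_eq hp hpC hqC h

theorem isArcIdCode_iff_arcIdConditions [Finite V] (hloop : ∀ v : V, ¬ A v v)
    (hC : ∀ p ∈ C, A p.1 p.2) :
    IsArcIdCode A C ↔ ArcIdConditionI A C ∧ ArcIdConditionII A C :=
  ⟨fun hcode => ⟨hcode.arcIdConditionI, hcode.arcIdConditionII hloop hC⟩,
    fun ⟨h1, h2⟩ => isArcIdCode_iff.mpr
      ⟨fun _ => h1.arcTrace_nonempty, fun _ _ hp hq hpq =>
        arcTrace_ne_of_arcIdConditions hloop h1 h2 hp hq hpq⟩⟩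

end ArcIdCode

theorem arc_id_code_characterization_general {V : Type*} [Fintype V]
    (A : V → V → Prop) (hloop : ∀ v : V, ¬ A v v)
    (C : Set (V × V)) (hC : ∀ p ∈ C, A p.1 p.2) :
    IsArcIdCode A C ↔
      ((∀ v : V, (omegaPlus A v \ C).ncard ≤ 1 ∧
          ((omegaPlus A v \ C).ncard = 1 → (omegaMinus A v ∩ C).Nonempty)) ∧
       (∀ u v : V, (u, v) ∈ C →
          ((v, u) ∈ C ∨ (omegaPlus A v \ C).ncard = 1) →
          (((omegaMinus A v ∪ omegaMinus A u) \ {(u, v), (v, u)}) ∩ C).Nonempty)) :=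
  isArcIdCode_iff_arcIdConditions hloop hC

/-- Characterization of arc-identifying codes: a set of arcs `C` of a strongly connected
loopless digraph of order at least 3 is an arc-identifying code iff it satisfies
conditions (i) and (ii). -/
theorem arc_id_code_characterization {V : Type*} [Fintype V]
    (A : V → V → Prop) (hloop : ∀ v : V, ¬ A v v) (hsc : StronglyConnected A)
    (hcard : 3 ≤ Nat.card V) (C : Set (V × V)) (hC : ∀ p ∈ C, A p.1 p.2) :
    IsArcIdCode A C ↔
      ((∀ v : V, (omegaPlus A v \ C).ncard ≤ 1 ∧
          ((omegaPlus A v \ C).ncard = 1 → (omegaMinus A v ∩ C).Nonempty)) ∧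
       (∀ u v : V, (u, v) ∈ C →
          ((v, u) ∈ C ∨ (omegaPlus A v \ C).ncard = 1) →
          (((omegaMinus A v ∪ omegaMinus A u) \ {(u, v), (v, u)}) ∩ C).Nonempty)) :=
  arc_id_code_characterization_general A hloop C hC
end

section
/- For all integers d ≥ 3 and k ≥ 2, the identifying number of the Kautz digraph K(d,k) is γ^ID(K(d,k)) = d^k − d^(k−2). -/
/-! The lower bound holds for every identifying code `C`: two vertices of `K(d,k)` with the same
prefix of length `k - 1` have the same in-neighbours, so at most one of them lies outside `C`, and
the complement of `C` has at most `|K(d,k-1)|` elements. Note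
`|K(d,k)| - |K(d,k-1)| = d^k - d^(k-2)`.

For the upper bound, view the vertices of `K(d,k)` as the arcs of `K(d,k-1)`, and let `T` be a
set of such arcs with exactly one arc leaving and at most one arc entering each vertex of
`K(d,k-1)`. The complement of `T` is an identifying code: every vertex then has at least
`d - 1 ≥ 2` in-neighbours outside `T`, and two vertices with the same prefix cannot both be in
`T`. -/

section IdentifyingCode

variable {V W : Type*} {A : V → V → Prop}

lemma Set.exists_mem_notMem_ne_of_two_lt_ncard {s T : Set V} (hs : 2 < s.ncard)
    (hsT : (s ∩ T).Subsingleton) (y : V) : ∃ u ∈ s, u ∉ T ∧ u ≠ y := by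
  have hfin : s.Finite := Set.finite_of_ncard_pos (by omega)
  have hinter : (s ∩ T).ncard ≤ 1 :=
    (Set.ncard_le_one_iff (hfin.subset Set.inter_subset_left)).2 fun ha hb => hsT ha hb
  have hdiff := Set.ncard_inter_add_ncard_sdiff_eq_ncard s T hfin
  obtain ⟨u, ⟨hus, huT⟩, huy⟩ := Set.exists_ne_of_one_lt_ncard (s := s \ T) (by omega) y
  exact ⟨u, hus, huT, huy⟩

lemma IsIdCode.injOn_compl_of_nminus_eq (f : V → W)
    (hf : ∀ x y, f x = f y → Nminus A x = Nminus A y) {C : Set V} (hC : IsIdCode A C) :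
    Set.InjOn f Cᶜ := by
  intro x hx y hy hxy
  by_contra hne
  apply hC.2 x y hne
  rw [NminusClosed, NminusClosed, Set.insert_inter_of_notMem hx, Set.insert_inter_of_notMem hy,
    hf x y hxy]

lemma IsIdCode.card_sub_le_ncard [Finite V] [Finite W] (f : V → W)
    (hf : ∀ x y, f x = f y → Nminus A x = Nminus A y) {C : Set V} (hC : IsIdCode A C) :
    Nat.card V - Nat.card W ≤ C.ncard := by
  have hcompl := Set.ncard_le_ncard_of_injOn f (fun _ _ => Set.mem_univ _)
    (hC.injOn_compl_of_nminus_eq f hf)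
  rw [Set.ncard_univ] at hcompl
  have hsum := Set.ncard_add_ncard_compl C
  omega

lemma isIdCode_compl (f : V → W) {T : Set V} (hT : Set.InjOn f T)
    (hf_adj : ∀ x y, f x = f y → ¬ A x y) (hf_nbr : ∀ u x y, A u x → A u y → f x = f y)
    (hsep : ∀ x y, ∃ u, A u x ∧ u ∉ T ∧ u ≠ y) :
    IsIdCode A Tᶜ := by
  refine ⟨fun v => ?_, fun x y hxy heq => ?_⟩
  · obtain ⟨u, hu, huT, -⟩ := hsep v v
    exact Or.inr ⟨u, huT, hu⟩
  by_cases hf : f x = f y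
  · wlog hx : x ∉ T generalizing x y
    · exact this y x hxy.symm heq.symm hf.symm fun hy => hxy (hT (not_not.mp hx) hy hf)
    have hxy' : x ∈ NminusClosed A y ∩ Tᶜ := heq ▸ ⟨Set.mem_insert _ _, hx⟩
    rcases hxy'.1 with rfl | hA
    · exact hxy rfl
    · exact hf_adj x y hf hA
  · obtain ⟨u, hu, huT, huy⟩ := hsep x y
    have huy' : u ∈ NminusClosed A y ∩ Tᶜ := heq ▸ ⟨Set.mem_insert_of_mem _ hu, huT⟩
    rcases huy'.1 with rfl | hA
    · exact huy rfl
    · exact hf (hf_nbr u x y hu hA)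

end IdentifyingCode

lemma Fin.forall_val_eq_add_one_iff {n : ℕ} {R : Fin (n + 1) → Fin (n + 1) → Prop} :
    (∀ i j : Fin (n + 1), (j : ℕ) = (i : ℕ) + 1 → R i j) ↔
      ∀ i : Fin n, R i.castSucc i.succ := by
  refine ⟨fun h i => h _ _ (by simp), fun h i j hij => ?_⟩
  obtain ⟨i', rfl⟩ : ∃ i' : Fin n, i'.castSucc = i := ⟨⟨i, by omega⟩, rfl⟩
  obtain rfl : i'.succ = j := Fin.ext (by simp [hij])
  exact h i'

namespace KautzVertex

variable {d n : ℕ}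

instance (k : ℕ) : Fintype (KautzVertex d k) := Subtype.fintype _

lemma ne_succ (x : KautzVertex d (n + 1)) (i : Fin n) : x.val i.castSucc ≠ x.val i.succ :=
  Fin.forall_val_eq_add_one_iff.1 x.2 i

def mk' (x : Fin (n + 1) → Fin (d + 1)) (hx : ∀ i : Fin n, x i.castSucc ≠ x i.succ) :
    KautzVertex d (n + 1) :=
  ⟨x, Fin.forall_val_eq_add_one_iff.2 hx⟩

lemma kautzAdj_iff {x y : KautzVertex d (n + 1)} :
    KautzAdj d (n + 1) x y ↔ Fin.init y.val = Fin.tail x.val := by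
  rw [KautzAdj, Fin.forall_val_eq_add_one_iff, funext_iff]
  rfl

def init (x : KautzVertex d (n + 1)) : KautzVertex d n :=
  ⟨Fin.init x.val, fun i j hij => x.2 i.castSucc j.castSucc hij⟩

lemma val_init (x : KautzVertex d (n + 1)) : (init x).val = Fin.init x.val := rfl

def snoc (w : KautzVertex d (n + 1)) (c : Fin (d + 1)) (hc : c ≠ w.val (Fin.last n)) :
    KautzVertex d (n + 2) :=
  mk' (Fin.snoc w.val c) fun i => by
    induction i using Fin.lastCases with
    | last => simpa [Fin.snoc] using hc.symm
    | cast i => simpa [← Fin.castSucc_succ] using w.ne_succ i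

lemma init_snoc (w : KautzVertex d (n + 1)) (c : Fin (d + 1)) (hc : c ≠ w.val (Fin.last n)) :
    init (snoc w c hc) = w :=
  Subtype.ext (Fin.init_snoc (α := fun _ => Fin (d + 1)) _ _)

def cons (z : Fin (d + 1)) (x : KautzVertex d (n + 1)) (hz : z ≠ x.val 0) :
    KautzVertex d (n + 2) :=
  mk' (Fin.cons z x.val) fun i => by
    induction i using Fin.cases with
    | zero => simpa using hz
    | succ i => simpa [← Fin.succ_castSucc] using x.ne_succ i

lemma kautzAdj_cons_init (x : KautzVertex d (n + 2)) (z : Fin (d + 1)) (hz : z ≠ x.val 0) :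
    KautzAdj d (n + 2) (cons z (init x) hz) x := by
  rw [kautzAdj_iff]
  rfl

lemma le_ncard_nminus (x : KautzVertex d (n + 2)) :
    d ≤ (Nminus (KautzAdj d (n + 2)) x).ncard := by
  have hinj : Function.Injective fun z : {z // z ≠ x.val 0} => cons z.1 (init x) z.2 :=
    fun z z' h => Subtype.ext (congrFun (congrArg Subtype.val h) 0)
  calc d = Nat.card {z // z ≠ x.val 0} := by simp
    _ = (Set.range fun z : {z // z ≠ x.val 0} => cons z.1 (init x) z.2).ncard :=
      (Set.ncard_range_of_injective hinj).symm
    _ ≤ (Nminus (KautzAdj d (n + 2)) x).ncard :=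
      Set.ncard_le_ncard (Set.range_subset_iff.2 fun z => kautzAdj_cons_init x z.1 z.2)

lemma nminus_eq_of_init_eq {x y : KautzVertex d (n + 2)} (h : init x = init y) :
    Nminus (KautzAdj d (n + 2)) x = Nminus (KautzAdj d (n + 2)) y := by
  ext u
  simp only [Nminus, Set.mem_ofPred_eq, kautzAdj_iff, ← val_init, h]

lemma init_eq_of_kautzAdj {u x y : KautzVertex d (n + 2)} (hx : KautzAdj d (n + 2) u x)
    (hy : KautzAdj d (n + 2) u y) : init x = init y :=
  Subtype.ext ((kautzAdj_iff.1 hx).trans (kautzAdj_iff.1 hy).symm)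

lemma not_kautzAdj_of_init_eq {x y : KautzVertex d (n + 2)} (h : init x = init y) :
    ¬ KautzAdj d (n + 2) x y := by
  intro hxy
  have h0 := congrFun ((kautzAdj_iff.1 hxy).symm.trans (congrArg Subtype.val h).symm) 0
  exact x.ne_succ 0 h0.symm

def equivSigma :
    KautzVertex d (n + 2) ≃ Σ w : KautzVertex d (n + 1), {c // c ≠ w.val (Fin.last n)} where
  toFun x := ⟨init x, x.val (Fin.last _),
    by simpa [val_init, Fin.init] using (x.ne_succ (Fin.last n)).symm⟩
  invFun p := snoc p.1 p.2.1 p.2.2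
  left_inv x := Subtype.ext (Fin.snoc_init_self x.val)
  right_inv := by
    rintro ⟨w, c, hc⟩
    refine Sigma.ext (init_snoc w c hc) ((Subtype.heq_iff_coe_eq fun _ => ?_).2 ?_)
    · dsimp only
      rw [init_snoc]
    · simp [snoc, mk']

lemma card_one : Nat.card (KautzVertex d 1) = d + 1 := by
  have hall (x : Fin 1 → Fin (d + 1)) :
      ∀ i j : Fin 1, (j : ℕ) = (i : ℕ) + 1 → x i ≠ x j :=
    fun _ _ _ => by omega
  have e : KautzVertex d 1 ≃ Fin (d + 1) :=
    (Equiv.subtypeUnivEquiv hall).trans (Equiv.funUnique (Fin 1) _)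
  rw [Nat.card_congr e, Nat.card_eq_fintype_card, Fintype.card_fin]

lemma card_add_two : Nat.card (KautzVertex d (n + 2)) = Nat.card (KautzVertex d (n + 1)) * d := by
  rw [Nat.card_congr equivSigma, Nat.card_sigma]
  simp

lemma card_add_one (n : ℕ) : Nat.card (KautzVertex d (n + 1)) = (d + 1) * d ^ n := by
  induction n with
  | zero => simpa using card_one
  | succ n ih => rw [card_add_two, ih, pow_succ, mul_assoc]

/-- For a fixed tail `s`, the words `z s` with `z ≠ s 0` share the out-neighbours `s c` with
`c ≠ s (last)`; a permutation sending `s 0` to `s (last)` matches the former bijectively with the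
latter. Without a tail the only constraint is `c ≠ z`, met by any derangement. -/
def matchingPerm : (n : ℕ) → (Fin n → Fin (d + 1)) → Equiv.Perm (Fin (d + 1))
  | 0, _ => finRotate (d + 1)
  | _ + 1, s => Equiv.swap (s 0) (s (Fin.last _))

def successor (w : KautzVertex d (n + 1)) : Fin (d + 1) :=
  matchingPerm n (Fin.tail w.val) (w.val 0)

lemma successor_ne_last (hd : 1 ≤ d) (w : KautzVertex d (n + 1)) :
    successor w ≠ w.val (Fin.last n) := by
  cases n with
  | zero =>
    obtain ⟨d, rfl⟩ : ∃ d', d = d' + 1 := ⟨d - 1, by omega⟩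
    simp [successor, matchingPerm]
  | succ n =>
    have hlast : Fin.tail w.val (Fin.last n) = w.val (Fin.last (n + 1)) := rfl
    rw [successor, matchingPerm, Ne, Equiv.swap_apply_eq_iff, ← hlast, Equiv.swap_apply_right]
    exact w.ne_succ 0

def successorArcs : Set (KautzVertex d (n + 2)) :=
  {x | x.val (Fin.last _) = successor (init x)}

lemma mem_successorArcs_iff {x : KautzVertex d (n + 2)} : x ∈ successorArcs ↔
    Fin.tail x.val (Fin.last n) = matchingPerm n (Fin.init (Fin.tail x.val)) (x.val 0) :=
  Iff.rfl

lemma init_injOn_successorArcs : Set.InjOn init (successorArcs (d := d) (n := n)) := by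
  intro x hx y hy h
  apply Subtype.ext
  rw [← Fin.snoc_init_self x.val, ← Fin.snoc_init_self y.val, ← val_init, ← val_init,
    show x.val (Fin.last _) = y.val (Fin.last _) from hx.trans (h ▸ hy.symm), h]

lemma ncard_successorArcs (hd : 1 ≤ d) :
    (successorArcs (d := d) (n := n)).ncard = Nat.card (KautzVertex d (n + 1)) := by
  rw [← init_injOn_successorArcs.ncard_image, ← Set.ncard_univ]
  congr 1
  refine Set.eq_univ_of_forall fun w => ⟨snoc w (successor w) (successor_ne_last hd w), ?_, ?_⟩
  · change _ = successor _
    rw [init_snoc]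
    simp [snoc, mk']
  · exact init_snoc _ _ _

lemma subsingleton_nminus_inter_successorArcs (x : KautzVertex d (n + 2)) :
    (Nminus (KautzAdj d (n + 2)) x ∩ successorArcs).Subsingleton := by
  rintro u ⟨hu, huT⟩ u' ⟨hu', huT'⟩
  have htail : Fin.tail u.val = Fin.tail u'.val :=
    (kautzAdj_iff.1 hu).symm.trans (kautzAdj_iff.1 hu')
  rw [mem_successorArcs_iff, htail] at huT
  rw [mem_successorArcs_iff] at huT'
  have hhead : u.val 0 = u'.val 0 := (Equiv.injective _) (huT.symm.trans huT')
  apply Subtype.ext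
  rw [← Fin.cons_self_tail u.val, ← Fin.cons_self_tail u'.val, hhead, htail]

lemma isIdCode_compl_successorArcs (hd : 3 ≤ d) :
    IsIdCode (KautzAdj d (n + 2)) successorArcsᶜ :=
  isIdCode_compl init init_injOn_successorArcs (fun _ _ => not_kautzAdj_of_init_eq)
    (fun _ _ _ => init_eq_of_kautzAdj) fun x y =>
      Set.exists_mem_notMem_ne_of_two_lt_ncard ((by omega : 2 < d).trans_le (le_ncard_nminus x))
        (subsingleton_nminus_inter_successorArcs x) y

lemma ncard_compl_successorArcs (hd : 1 ≤ d) :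
    (successorArcs (d := d) (n := n))ᶜ.ncard =
      Nat.card (KautzVertex d (n + 2)) - Nat.card (KautzVertex d (n + 1)) := by
  rw [Set.ncard_compl, ncard_successorArcs hd]

lemma card_add_two_sub_card_add_one :
    Nat.card (KautzVertex d (n + 2)) - Nat.card (KautzVertex d (n + 1)) = d ^ (n + 2) - d ^ n :=
  calc Nat.card (KautzVertex d (n + 2)) - Nat.card (KautzVertex d (n + 1))
    _ = (d + 1) * d ^ (n + 1) - (d + 1) * d ^ n := by rw [card_add_one, card_add_one]
    _ = (d ^ (n + 2) + d ^ (n + 1)) - (d ^ n + d ^ (n + 1)) := by congr 1 <;> ring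
    _ = d ^ (n + 2) - d ^ n := Nat.add_sub_add_right _ _ _

end KautzVertex

/-- The identifying number of the Kautz digraph `K(d,k)` is `d^k - d^(k-2)` for `d ≥ 3`
and `k ≥ 2`. -/
theorem kautz_id_number (d k : ℕ) (hd : 3 ≤ d) (hk : 2 ≤ k) :
    idNumber (KautzAdj d k) = d ^ k - d ^ (k - 2) := by
  obtain ⟨n, rfl⟩ : ∃ n, k = n + 2 := ⟨k - 2, by omega⟩
  rw [Nat.add_sub_cancel, ← KautzVertex.card_add_two_sub_card_add_one]
  refine IsLeast.csInf_eq ⟨⟨_, KautzVertex.isIdCode_compl_successorArcs hd,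
    KautzVertex.ncard_compl_successorArcs (by omega)⟩, ?_⟩
  rintro _ ⟨C, hC, rfl⟩
  exact hC.card_sub_le_ncard KautzVertex.init fun _ _ => KautzVertex.nminus_eq_of_init_eq
end
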